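/- arXiv:1407.2346 — 11 statements merged into one kernel-verified Lean document; each statement's English description precedes it below -/
import Mathlib

section
/- Let p be a prime, k a field of characteristic p, X a locally compact Hausdorff totally disconnected topological space, and σ : X → X a homeomorphism with σ^p = id. Let C_c^∞(X;k) denote the k-vector space of locally constant compactly supported functions X → k, on which σ acts by f ↦ f∘σ, and let X^σ ⊆ X be the fixed-point set of σ. Then for i = 0 and i = 1, the map given by restricting a function on X to X^σ descends to a k-linear isomorphism T^i(C_c^∞(X;k)) ≅ C_c^∞(X^σ;k). -/
/-!
Away from its fixed points `σ` generates a free action of `ℤ/p` (orbits have prime length `p`),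
and every free point has a clopen neighbourhood meeting each orbit at most once.  By compactness
these glue to a clopen fundamental domain `V` for the support of a function, so `C_c^∞` of the
free part is an induced module with vanishing Tate cohomology: an invariant `f` vanishing on `X^σ`
is `N (1_V f)`, and an `f` with `N f = 0` is `(1 - σ) g` for the partial orbit sums `g` starting
at `V`.  On `X^σ` the action is trivial and `N = p = 0`, so both Tate groups become
`C_c^∞(X^σ; k)`; surjectivity comes from extending a function off the closed set `X^σ` and then
discarding it on the orbits where it is not constant.
-/

open Set Function

namespace IsLocallyConstant

variable {X M : Type*} [TopologicalSpace X]

lemma indicator [Zero M] {f : X → M} (hf : IsLocallyConstant f) {U : Set X} (hU : IsClopen U) :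
    IsLocallyConstant (U.indicator f) :=
  (LocallyConstant.indicator ⟨f, hf⟩ hU).isLocallyConstant

lemma finset_sum [AddCommMonoid M] {ι : Type*} {s : Finset ι} {F : ι → X → M}
    (hF : ∀ i ∈ s, IsLocallyConstant (F i)) : IsLocallyConstant fun x => ∑ i ∈ s, F i x := by
  classical
  induction s using Finset.induction_on with
  | empty => exact IsLocallyConstant.const 0
  | insert a s ha ih =>
    simp only [Finset.sum_insert ha]
    exact (hF a (s.mem_insert_self a)).add (ih fun i hi => hF i (Finset.mem_insert_of_mem hi))

lemma isClopen_setOf_eq {f g : X → M} (hf : IsLocallyConstant f) (hg : IsLocallyConstant g) :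
    IsClopen {x | f x = g x} := by
  simpa using (hf.comp₂ hg (· = ·)).isClopen_fiber True

lemma isCompact_support [Zero M] {f : X → M} (hf : IsLocallyConstant f)
    (hfc : HasCompactSupport f) : IsCompact (support f) :=
  hfc.of_isClosed_subset (hf.isOpen_fiber 0).isClosed_compl (subset_tsupport f)

lemma range_finite_of_hasCompactSupport [Zero M] {f : X → M} (hf : IsLocallyConstant f)
    (hfc : HasCompactSupport f) : (range f).Finite := by
  let _ : TopologicalSpace M := ⊥
  have : DiscreteTopology M := ⟨rfl⟩
  refine (((hf.isCompact_support hfc).image hf.continuous).finite_of_discrete.insert 0).subset ?_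
  rintro _ ⟨x, rfl⟩
  by_cases hx : f x = 0
  · exact Or.inl hx
  · exact Or.inr (mem_image_of_mem f hx)

end IsLocallyConstant

section ZeroDimensional

variable {X : Type*} [TopologicalSpace X] [LocallyCompactSpace X] [T2Space X]
  [TotallyDisconnectedSpace X]

lemma IsCompact.exists_isClopen_isCompact_between {K O : Set X} (hK : IsCompact K)
    (hO : IsOpen O) (hKO : K ⊆ O) :
    ∃ U, IsClopen U ∧ IsCompact U ∧ K ⊆ U ∧ U ⊆ O := by
  obtain ⟨L, hL, hKL, hLO⟩ := exists_compact_between hK hO hKO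
  have hV : ∀ x ∈ K, ∃ V, V ∈ {V : Set X | IsClopen V} ∧ x ∈ V ∧ V ⊆ interior L :=
    fun x hx => loc_compact_Haus_tot_disc_of_zero_dim.isOpen_iff.mp isOpen_interior x (hKL hx)
  choose! V hVc hxV hVL using hV
  obtain ⟨t, htK, hKt⟩ := hK.elim_nhds_subcover V fun x hx => (hVc x hx).isOpen.mem_nhds (hxV x hx)
  have hU : IsClopen (⋃ x ∈ t, V x) := isClopen_biUnion_finset fun x hx => hVc x (htK x hx)
  refine ⟨_, hU, hL.of_isClosed_subset hU.isClosed ?_, hKt, ?_⟩ <;>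
    refine iUnion₂_subset fun x hx => (hVL x (htK x hx)).trans ?_
  exacts [interior_subset, interior_subset.trans hLO]

theorem IsLocallyConstant.exists_extension {M : Type*} [AddCommMonoid M] {Y : Set X}
    (hY : IsClosed Y) {h : Y → M} (hh : IsLocallyConstant h) (hhc : HasCompactSupport h) :
    ∃ f : X → M, IsLocallyConstant f ∧ HasCompactSupport f ∧ ∀ y : Y, f y = h y := by
  classical
  -- `U c` cuts out the fibre `h = c` of `Y` (it is empty for `c = 0`), and `f = ∑ c • 1_{U c}`.
  have hU : ∀ c : M, ∃ U, IsClopen U ∧ IsCompact U ∧ ∀ y : Y, (y : X) ∈ U ↔ h y = c ∧ c ≠ 0 := by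
    intro c
    by_cases hc : c = 0
    · exact ⟨∅, isClopen_empty, isCompact_empty, by simp [hc]⟩
    have hA : IsCompact (((↑) : Y → X) '' (h ⁻¹' {c})) :=
      ((hh.isCompact_support hhc).of_isClosed_subset (hh.isClosed_fiber c)
        fun y hy => by simp_all [mem_support]).image continuous_subtype_val
    have hO : IsOpen (((↑) : Y → X) '' (h ⁻¹' {c})ᶜ)ᶜ :=
      (hY.isClosedMap_subtype_val _ (hh.isOpen_fiber c).isClosed_compl).isOpen_compl
    obtain ⟨U, hUc, hUk, hAU, hUO⟩ := hA.exists_isClopen_isCompact_between hO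
      (by rintro _ ⟨y, hy, rfl⟩ ⟨z, hz, hzy⟩; exact hz (Subtype.val_injective hzy ▸ hy))
    refine ⟨U, hUc, hUk, fun y => ⟨fun hy => ⟨?_, hc⟩, fun hy => hAU ⟨y, hy.1, rfl⟩⟩⟩
    by_contra hne
    exact hUO hy ⟨y, hne, rfl⟩
  choose U hUc hUk hUh using hU
  set T := (hh.range_finite_of_hasCompactSupport hhc).toFinset
  refine ⟨fun x => ∑ c ∈ T, (U c).indicator (fun _ => c) x,
    IsLocallyConstant.finset_sum fun c _ => (IsLocallyConstant.const c).indicator (hUc c),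
    HasCompactSupport.intro (T.isCompact_biUnion fun c _ => hUk c) fun x hx => ?_, fun y => ?_⟩
  · exact Finset.sum_eq_zero fun c hc => indicator_of_notMem (fun hxc => hx (mem_biUnion hc hxc)) _
  · dsimp only
    rw [Finset.sum_eq_single_of_mem (h y) (by simp [T]) fun c _ hc =>
      indicator_of_notMem (fun hy => hc ((hUh c y).1 hy).1.symm) _]
    by_cases h0 : h y = 0
    · simp [h0]
    · exact indicator_of_mem ((hUh _ y).2 ⟨rfl, h0⟩) _

end ZeroDimensional

namespace PeriodicMap

variable {X M : Type*} {σ : X → X} {p : ℕ}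

lemma exists_lt_iterate_eq (hσ : ∀ x, σ^[p] x = x) (hp : 0 < p) (x : X) (n : ℕ) :
    ∃ i < p, σ^[i] x = σ^[n] x :=
  ⟨n % p, Nat.mod_lt n hp, IsPeriodicPt.iterate_mod_apply (hσ x) n⟩

lemma exists_lt_iterate_iterate_eq (hσ : ∀ x, σ^[p] x = x) (hp : 0 < p) (x : X) (m n : ℕ) :
    ∃ i < p, σ^[i] (σ^[m] x) = σ^[n] x := by
  obtain ⟨i, hi, hi'⟩ := exists_lt_iterate_eq hσ hp (σ^[m] x) (n + (p - 1) * m)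
  refine ⟨i, hi, hi'.trans ?_⟩
  have hpm : n + (p - 1) * m + m = n + p * m := by
    obtain ⟨q, rfl⟩ := Nat.exists_eq_add_one_of_ne_zero hp.ne'
    simp only [Nat.add_sub_cancel]
    ring
  rw [← iterate_add_apply, hpm, iterate_add_apply, (IsPeriodicPt.mul_const (hσ x) m).eq]

/-- The norm `N = 1 + σ + ⋯ + σ^{p-1}`, acting on functions by precomposition. -/
def orbitSum [AddCommMonoid M] (σ : X → X) (p : ℕ) (f : X → M) (x : X) : M :=
  ∑ i ∈ Finset.range p, f (σ^[i] x)

lemma orbitSum_eq_zero_of_charP {R : Type*} [Semiring R] [CharP R p] {f : X → R} {x : X}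
    (hx : ∀ i, f (σ^[i] x) = f x) : orbitSum σ p f x = 0 := by
  simp [orbitSum, hx, CharP.cast_eq_zero]

lemma orbitSum_succ [AddCommMonoid M] (f : X → M) (n : ℕ) (x : X) :
    orbitSum σ (n + 1) f x = orbitSum σ n f (σ x) + f x := by
  simp [orbitSum, Finset.sum_range_succ']

def saturation (σ : X → X) (p : ℕ) (S : Set X) : Set X := ⋃ i ∈ Finset.range p, σ^[i] ⁻¹' S

lemma mem_saturation {S : Set X} {x : X} : x ∈ saturation σ p S ↔ ∃ i < p, σ^[i] x ∈ S := by
  simp [saturation]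

lemma iterate_mem_saturation (hσ : ∀ x, σ^[p] x = x) (hp : 0 < p) {S : Set X} {x : X} {i : ℕ}
    (hi : σ^[i] x ∈ S) (j : ℕ) : σ^[j] x ∈ saturation σ p S := by
  obtain ⟨k, hk, hk'⟩ := exists_lt_iterate_iterate_eq hσ hp x j i
  exact mem_saturation.2 ⟨k, hk, hk' ▸ hi⟩

def MeetsOrbitsAtMostOnce (σ : X → X) (p : ℕ) (V : Set X) : Prop :=
  ∀ x i j, i < p → j < p → σ^[i] x ∈ V → σ^[j] x ∈ V → i = j

lemma meetsOrbitsAtMostOnce_of_forall {W : Set X}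
    (hW : ∀ y ∈ W, ∀ d, 0 < d → d < p → σ^[d] y ∉ W) : MeetsOrbitsAtMostOnce σ p W := by
  intro x i j hi hj hxi hxj
  by_contra hij
  wlog hlt : i < j generalizing i j
  · exact this j i hj hi hxj hxi (Ne.symm hij) (by omega)
  refine hW _ hxi (j - i) (by omega) (by omega) ?_
  rwa [← iterate_add_apply, Nat.sub_add_cancel hlt.le]

lemma MeetsOrbitsAtMostOnce.union_diff_saturation (hσ : ∀ x, σ^[p] x = x) (hp : 0 < p)
    {V W : Set X} (hV : MeetsOrbitsAtMostOnce σ p V) (hW : MeetsOrbitsAtMostOnce σ p W) :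
    MeetsOrbitsAtMostOnce σ p (V ∪ (W \ saturation σ p V)) := by
  rintro x i j hi hj (hxi | ⟨hxi, hxi'⟩) (hxj | ⟨hxj, hxj'⟩)
  · exact hV x i j hi hj hxi hxj
  · exact absurd (iterate_mem_saturation hσ hp hxi j) hxj'
  · exact absurd (iterate_mem_saturation hσ hp hxj i) hxi'
  · exact hW x i j hi hj hxi hxj

/-- If `σ^[m] x ∈ V` with `m < p`, the value at `x` is `∑_{j<m} f (σ^[j] x)`.  When `V` is a
fundamental domain and `N f = 0`, this solves `g - g ∘ σ = f`. -/
noncomputable def primitive [AddCommMonoid M] (σ : X → X) (p : ℕ) (V : Set X) (f : X → M)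
    (x : X) : M :=
  ∑ m ∈ Finset.range p, (σ^[m] ⁻¹' V).indicator (orbitSum σ m f) x

section Algebra

variable {V : Set X} {f : X → M} {x : X}

lemma primitive_eq [AddCommMonoid M] (hV : MeetsOrbitsAtMostOnce σ p V) {m : ℕ} (hm : m < p)
    (hx : σ^[m] x ∈ V) : primitive σ p V f x = orbitSum σ m f x := by
  rw [primitive, Finset.sum_eq_single_of_mem m (Finset.mem_range.2 hm) fun n hn hnm =>
    indicator_of_notMem (fun hnV : x ∈ σ^[n] ⁻¹' V =>
      hnm (hV x n m (Finset.mem_range.1 hn) hm hnV hx)) _]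
  exact indicator_of_mem (mem_preimage.2 hx) _

lemma primitive_eq_zero [AddCommMonoid M] (hx : ∀ m < p, σ^[m] x ∉ V) :
    primitive σ p V f x = 0 :=
  Finset.sum_eq_zero fun m hm =>
    indicator_of_notMem (mt mem_preimage.1 (hx m (Finset.mem_range.1 hm))) _

lemma primitive_sub_primitive_apply [AddCommGroup M] (hσ : ∀ x, σ^[p] x = x) (hp : 0 < p)
    (hV : MeetsOrbitsAtMostOnce σ p V) (hVcov : ∀ x ∈ support f, ∃ k < p, σ^[k] x ∈ V)
    (hN : ∀ x, orbitSum σ p f x = 0) (x : X) :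
    primitive σ p V f x - primitive σ p V f (σ x) = f x := by
  by_cases hx : ∃ m < p, σ^[m] x ∈ V
  · obtain ⟨m, hm, hmV⟩ := hx
    cases m with
    | zero =>
      have hσxV : σ^[p - 1] (σ^[1] x) ∈ V := by
        rwa [← iterate_add_apply, Nat.sub_add_cancel hp, hσ]
      have hsum := orbitSum_succ (σ := σ) f (p - 1) x
      rw [Nat.sub_add_cancel hp, hN] at hsum
      rw [primitive_eq hV hm hmV, primitive_eq (x := σ x) hV (Nat.sub_lt hp one_pos) hσxV,
        eq_neg_of_add_eq_zero_left hsum.symm]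
      simp [orbitSum]
    | succ m =>
      have hσxV : σ^[m] (σ x) ∈ V := by rwa [← iterate_succ_apply]
      rw [primitive_eq hV hm hmV, primitive_eq hV (Nat.lt_of_succ_lt hm) hσxV, orbitSum_succ,
        add_sub_cancel_left]
  · simp only [not_exists, not_and] at hx
    have hσx : ∀ m < p, σ^[m] (σ x) ∉ V := fun m _ hmV => by
      obtain ⟨i, hi, hix⟩ := exists_lt_iterate_eq hσ hp x (m + 1)
      exact hx i hi (hix ▸ hmV)
    have hfx : f x = 0 := by
      by_contra hne
      obtain ⟨k, hk, hkV⟩ := hVcov x hne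
      exact hx k hk hkV
    rw [primitive_eq_zero hx, primitive_eq_zero hσx, hfx, sub_zero]

end Algebra

section Topology

variable [TopologicalSpace X]

lemma isClopen_saturation (hσc : Continuous σ) {S : Set X} (hS : IsClopen S) :
    IsClopen (saturation σ p S) :=
  isClopen_biUnion_finset fun i _ => hS.preimage (hσc.iterate i)

lemma exists_isClopen_meetsOrbitsAtMostOnce_cover (hσc : Continuous σ) (hσ : ∀ x, σ^[p] x = x)
    (hp : 0 < p) {ι : Type*} (s : Finset ι) {W : ι → Set X}
    (hW : ∀ i ∈ s, IsClopen (W i) ∧ MeetsOrbitsAtMostOnce σ p (W i)) :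
    ∃ V, IsClopen V ∧ MeetsOrbitsAtMostOnce σ p V ∧ ∀ x ∈ ⋃ i ∈ s, W i, ∃ k < p, σ^[k] x ∈ V := by
  classical
  induction s using Finset.induction_on with
  | empty => exact ⟨∅, isClopen_empty, fun _ _ _ _ _ h => h.elim, by simp⟩
  | insert a s ha ih =>
    obtain ⟨V, hVc, hV, hVcov⟩ := ih fun i hi => hW i (Finset.mem_insert_of_mem hi)
    obtain ⟨hWc, hWa⟩ := hW a (s.mem_insert_self a)
    refine ⟨V ∪ (W a \ saturation σ p V), hVc.union (hWc.diff (isClopen_saturation hσc hVc)),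
      hV.union_diff_saturation hσ hp hWa, ?_⟩
    simp only [Finset.set_biUnion_insert, mem_union]
    rintro x (hx | hx)
    · by_cases hxV : x ∈ saturation σ p V
      · obtain ⟨k, hk, hkV⟩ := mem_saturation.1 hxV
        exact ⟨k, hk, Or.inl hkV⟩
      · exact ⟨0, hp, Or.inr ⟨hx, hxV⟩⟩
    · obtain ⟨k, hk, hkV⟩ := hVcov x hx
      exact ⟨k, hk, Or.inl hkV⟩

lemma isLocallyConstant_orbitSum [AddCommMonoid M] (hσc : Continuous σ) {f : X → M}
    (hf : IsLocallyConstant f) (n : ℕ) : IsLocallyConstant (orbitSum σ n f) :=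
  IsLocallyConstant.finset_sum fun i _ => hf.comp_continuous (hσc.iterate i)

lemma isLocallyConstant_primitive [AddCommMonoid M] (hσc : Continuous σ) {V : Set X}
    (hVc : IsClopen V) {f : X → M} (hf : IsLocallyConstant f) :
    IsLocallyConstant (primitive σ p V f) :=
  IsLocallyConstant.finset_sum fun m _ =>
    (isLocallyConstant_orbitSum hσc hf m).indicator (hVc.preimage (hσc.iterate m))

lemma hasCompactSupport_primitive [T2Space X] [AddCommMonoid M] (hσc : Continuous σ)
    (hσ : ∀ x, σ^[p] x = x) (hp : 0 < p) (V : Set X) {f : X → M} (hfc : HasCompactSupport f) :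
    HasCompactSupport (primitive σ p V f) := by
  refine HasCompactSupport.intro ((Finset.range p).isCompact_biUnion fun i _ =>
    hfc.isCompact.image (hσc.iterate i)) fun x hx => Finset.sum_eq_zero fun m hm =>
      indicator_apply_eq_zero.2 fun _ => Finset.sum_eq_zero fun j hj => ?_
  by_contra hne
  obtain ⟨i, hi, hix⟩ := exists_lt_iterate_iterate_eq hσ hp x j 0
  exact hx (mem_biUnion (Finset.mem_range.2 hi) ⟨_, subset_tsupport f hne, hix⟩)

lemma exists_invariant_eq_on_fixedPoints [Zero M] (hσc : Continuous σ) (hσ : ∀ x, σ^[p] x = x)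
    (hp : 0 < p) {f : X → M} (hf : IsLocallyConstant f) (hfc : HasCompactSupport f) :
    ∃ g : X → M, IsLocallyConstant g ∧ HasCompactSupport g ∧ (∀ x, g (σ x) = g x) ∧
      ∀ x, σ x = x → g x = f x := by
  -- `f` is kept only on the orbits where it is constant: a clopen invariant set containing `X^σ`.
  set E := {x | ∀ n, f (σ^[n] x) = f x}
  have hE : E = ⋂ i ∈ Finset.range p, {x | f (σ^[i] x) = f x} := by
    ext x
    simp only [E, mem_ofPred_eq, mem_iInter, Finset.mem_range]
    refine ⟨fun h i _ => h i, fun h n => ?_⟩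
    obtain ⟨i, hi, hin⟩ := exists_lt_iterate_eq hσ hp x n
    exact hin ▸ h i hi
  have hEc : IsClopen E := hE ▸ isClopen_biInter_finset fun i _ =>
    (hf.comp_continuous (hσc.iterate i)).isClopen_setOf_eq hf
  have hσE : ∀ x, σ x ∈ E ↔ x ∈ E := by
    refine fun x => ⟨fun h => ?_, fun h n => ?_⟩
    · have h' : ∀ n, f (σ^[n] x) = f (σ x) := fun n => by
        obtain ⟨i, -, hi⟩ := exists_lt_iterate_iterate_eq hσ hp x 1 n
        rw [← hi]
        exact h i
      exact fun n => (h' n).trans (h' 0).symm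
    · rw [← iterate_succ_apply, h]
      exact (h 1).symm
  refine ⟨E.indicator f, hf.indicator hEc,
    hfc.mono (support_indicator.trans_subset inter_subset_right),
    fun x => ?_, fun x hx => indicator_of_mem (fun n => by rw [iterate_fixed hx]) f⟩
  by_cases hx : x ∈ E
  · rw [indicator_of_mem hx, indicator_of_mem ((hσE x).2 hx)]
    exact hx 1
  · rw [indicator_of_notMem hx, indicator_of_notMem (mt (hσE x).1 hx)]

theorem exists_invariant_extension [LocallyCompactSpace X] [T2Space X]
    [TotallyDisconnectedSpace X] [AddCommMonoid M] (hσc : Continuous σ) (hσ : ∀ x, σ^[p] x = x)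
    (hp : 0 < p) {h : {x // σ x = x} → M} (hh : IsLocallyConstant h) (hhc : HasCompactSupport h) :
    ∃ f : X → M, IsLocallyConstant f ∧ HasCompactSupport f ∧ (∀ x, f (σ x) = f x) ∧
      ∀ x : {x // σ x = x}, f x.1 = h x := by
  obtain ⟨f₀, hf₀, hf₀c, hf₀h⟩ := hh.exists_extension (isClosed_fixedPoints hσc) hhc
  obtain ⟨f, hf, hfc, hinv, hfix⟩ := exists_invariant_eq_on_fixedPoints hσc hσ hp hf₀ hf₀c
  exact ⟨f, hf, hfc, hinv, fun x => (hfix x.1 x.2).trans (hf₀h x)⟩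

variable [TotallySeparatedSpace X]

lemma exists_isClopen_mem_meetsOrbitsAtMostOnce (hσc : Continuous σ) (hp : p.Prime)
    (hσ : ∀ x, σ^[p] x = x) {x : X} (hx : σ x ≠ x) :
    ∃ W, IsClopen W ∧ x ∈ W ∧ MeetsOrbitsAtMostOnce σ p W := by
  have : Fact p.Prime := ⟨hp⟩
  have hper : minimalPeriod σ x = p := minimalPeriod_eq_prime (hσ x) hx
  have hD : ∀ d ∈ Finset.Ico 1 p, ∃ D, IsClopen D ∧ x ∈ D ∧ σ^[d] x ∉ D := by
    intro d hd
    obtain ⟨hd1, hdp⟩ := Finset.mem_Ico.1 hd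
    refine exists_isClopen_of_totally_separated fun h => ?_
    exact (hper ▸ IsPeriodicPt.minimalPeriod_le hd1 h.symm).not_gt hdp
  choose! D hDc hxD hσD using hD
  refine ⟨⋂ d ∈ Finset.Ico 1 p, D d \ σ^[d] ⁻¹' D d,
    isClopen_biInter_finset fun d hd => (hDc d hd).diff ((hDc d hd).preimage (hσc.iterate d)),
    mem_iInter₂.2 fun d hd => ⟨hxD d hd, hσD d hd⟩, meetsOrbitsAtMostOnce_of_forall ?_⟩
  intro y hy d hd hdp hdy
  have hd' : d ∈ Finset.Ico 1 p := Finset.mem_Ico.2 ⟨hd, hdp⟩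
  exact (mem_iInter₂.1 hy d hd').2 (mem_iInter₂.1 hdy d hd').1

theorem _root_.IsCompact.exists_isClopen_meetsOrbitsAtMostOnce (hσc : Continuous σ)
    (hp : p.Prime) (hσ : ∀ x, σ^[p] x = x) {K : Set X} (hK : IsCompact K)
    (hfree : ∀ x ∈ K, σ x ≠ x) :
    ∃ V, IsClopen V ∧ MeetsOrbitsAtMostOnce σ p V ∧ ∀ x ∈ K, ∃ k < p, σ^[k] x ∈ V := by
  choose! W hWc hxW hW using fun x hx => exists_isClopen_mem_meetsOrbitsAtMostOnce hσc hp hσ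
    (hfree x hx)
  obtain ⟨t, htK, hKt⟩ :=
    hK.elim_nhds_subcover W fun x hx => (hWc x hx).isOpen.mem_nhds (hxW x hx)
  obtain ⟨V, hVc, hV, hVcov⟩ := exists_isClopen_meetsOrbitsAtMostOnce_cover hσc hσ hp.pos t
    fun x hx => ⟨hWc x (htK x hx), hW x (htK x hx)⟩
  exact ⟨V, hVc, hV, fun x hx => hVcov x (hKt hx)⟩

theorem exists_orbitSum_eq_of_invariant [AddCommMonoid M] (hσc : Continuous σ) (hp : p.Prime)
    (hσ : ∀ x, σ^[p] x = x) {f : X → M} (hf : IsLocallyConstant f) (hfc : HasCompactSupport f)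
    (hinv : ∀ x, f (σ x) = f x) (hfix : ∀ x, σ x = x → f x = 0) :
    ∃ g : X → M, IsLocallyConstant g ∧ HasCompactSupport g ∧ ∀ x, f x = orbitSum σ p g x := by
  obtain ⟨V, hVc, hV, hVcov⟩ := (hf.isCompact_support hfc).exists_isClopen_meetsOrbitsAtMostOnce
    hσc hp hσ fun x hx hσx => hx (hfix x hσx)
  have hinv_iterate (i : ℕ) (x : X) : f (σ^[i] x) = f x :=
    congrFun (iterate_invariant (funext hinv) i) x
  refine ⟨V.indicator f, hf.indicator hVc,
    hfc.mono (support_indicator.trans_subset inter_subset_right), fun x => ?_⟩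
  by_cases hx : x ∈ support f
  · obtain ⟨k, hk, hkV⟩ := hVcov x hx
    rw [orbitSum, Finset.sum_eq_single_of_mem k (Finset.mem_range.2 hk) fun i hi hik =>
      indicator_of_notMem (fun hiV => hik (hV x i k (Finset.mem_range.1 hi) hk hiV hkV)) f,
      indicator_of_mem hkV, hinv_iterate]
  · rw [notMem_support.1 hx]
    exact (Finset.sum_eq_zero fun i _ => indicator_apply_eq_zero.2 fun _ => by
      rw [hinv_iterate, notMem_support.1 hx]).symm

theorem exists_sub_eq_of_orbitSum_eq_zero [AddCommGroup M]
    (hσc : Continuous σ) (hp : p.Prime) (hσ : ∀ x, σ^[p] x = x) {f : X → M}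
    (hf : IsLocallyConstant f) (hfc : HasCompactSupport f) (hN : ∀ x, orbitSum σ p f x = 0)
    (hfix : ∀ x, σ x = x → f x = 0) :
    ∃ g : X → M, IsLocallyConstant g ∧ HasCompactSupport g ∧ ∀ x, f x = g x - g (σ x) := by
  obtain ⟨V, hVc, hV, hVcov⟩ := (hf.isCompact_support hfc).exists_isClopen_meetsOrbitsAtMostOnce
    hσc hp hσ fun x hx hσx => hx (hfix x hσx)
  exact ⟨primitive σ p V f, isLocallyConstant_primitive hσc hVc hf,
    hasCompactSupport_primitive hσc hσ hp.pos V hfc,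
    fun x => (primitive_sub_primitive_apply hσ hp.pos hV hVcov hN x).symm⟩

end Topology

end PeriodicMap

open PeriodicMap

/--
Let `p` be a prime, `k` a field of characteristic `p`, `X` a locally compact Hausdorff
totally disconnected space and `σ : X ≃ₜ X` with `σ^p = id`.  The space `C_c^∞(X;k)` of
locally constant compactly supported functions carries the action `f ↦ f ∘ σ`, with
norm `N f = ∑_{i<p} f ∘ σ^i`.  For `i = 0, 1`, restriction of functions to the fixed-point
set `X^σ` descends to a `k`-linear isomorphism `T^i(C_c^∞(X;k)) ≅ C_c^∞(X^σ;k)`; this is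
expressed below as: restriction lands in `C_c^∞(X^σ;k)`, kills the image of the relevant
"boundary" operator, and the induced maps on `T⁰ = ker(1-σ)/im N` and `T¹ = ker N/im(1-σ)`
are injective and surjective.
-/
theorem tate_ccInfty_field
    (p : ℕ) (hp : p.Prime)
    (k : Type*) [Field k] (hk : CharP k p)
    (X : Type*) [TopologicalSpace X] [LocallyCompactSpace X] [T2Space X]
    [TotallyDisconnectedSpace X]
    (σ : X ≃ₜ X) (hσ : ∀ x, (⇑σ)^[p] x = x) :
    -- restriction to the fixed-point set lands in C_c^∞(X^σ; k)
    ((∀ f : X → k, IsLocallyConstant f → HasCompactSupport f →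
        IsLocallyConstant (fun x : {x : X // σ x = x} => f x.1) ∧
        HasCompactSupport (fun x : {x : X // σ x = x} => f x.1))
    -- T⁰: restriction kills the image of the norm map
    ∧ (∀ g : X → k, IsLocallyConstant g → HasCompactSupport g →
        ∀ x : X, σ x = x → (∑ i ∈ Finset.range p, g ((⇑σ)^[i] x)) = 0)
    -- T⁰: injectivity of the descended map
    ∧ (∀ f : X → k, IsLocallyConstant f → HasCompactSupport f →
        (∀ x, f (σ x) = f x) → (∀ x : X, σ x = x → f x = 0) →
        ∃ g : X → k, IsLocallyConstant g ∧ HasCompactSupport g ∧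
          ∀ x, f x = ∑ i ∈ Finset.range p, g ((⇑σ)^[i] x))
    -- T⁰: surjectivity of the descended map
    ∧ (∀ h : {x : X // σ x = x} → k, IsLocallyConstant h → HasCompactSupport h →
        ∃ f : X → k, IsLocallyConstant f ∧ HasCompactSupport f ∧
          (∀ x, f (σ x) = f x) ∧ ∀ x : {x : X // σ x = x}, f x.1 = h x)
    -- T¹: restriction kills the image of 1 - σ
    ∧ (∀ g : X → k, IsLocallyConstant g → HasCompactSupport g →
        ∀ x : X, σ x = x → g x - g (σ x) = 0)
    -- T¹: injectivity of the descended map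
    ∧ (∀ f : X → k, IsLocallyConstant f → HasCompactSupport f →
        (∀ x, (∑ i ∈ Finset.range p, f ((⇑σ)^[i] x)) = 0) →
        (∀ x : X, σ x = x → f x = 0) →
        ∃ g : X → k, IsLocallyConstant g ∧ HasCompactSupport g ∧
          ∀ x, f x = g x - g (σ x))
    -- T¹: surjectivity of the descended map
    ∧ (∀ h : {x : X // σ x = x} → k, IsLocallyConstant h → HasCompactSupport h →
        ∃ f : X → k, IsLocallyConstant f ∧ HasCompactSupport f ∧
          (∀ x, (∑ i ∈ Finset.range p, f ((⇑σ)^[i] x)) = 0) ∧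
          ∀ x : {x : X // σ x = x}, f x.1 = h x)) := by
  have hσc := σ.continuous
  refine ⟨fun f hf hfc => ⟨hf.comp_continuous continuous_subtype_val,
      hfc.comp_isClosedEmbedding (isClosed_fixedPoints hσc).isClosedEmbedding_subtypeVal⟩,
    fun g _ _ x hx => orbitSum_eq_zero_of_charP fun i => by rw [iterate_fixed hx],
    fun f hf hfc hinv hfix => exists_orbitSum_eq_of_invariant hσc hp hσ hf hfc hinv hfix,
    fun h hh hhc => exists_invariant_extension hσc hσ hp.pos hh hhc,
    fun g _ _ x hx => by rw [hx, sub_self],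
    fun f hf hfc hN hfix => exists_sub_eq_of_orbitSum_eq_zero hσc hp hσ hf hfc hN hfix,
    fun h hh hhc => ?_⟩
  obtain ⟨f, hf, hfc, hinv, hfh⟩ := exists_invariant_extension hσc hσ hp.pos hh hhc
  exact ⟨f, hf, hfc, fun x => orbitSum_eq_zero_of_charP fun i =>
    congrFun (iterate_invariant (funext hinv) i) x, hfh⟩
end

section
/- Let p be a prime, k a perfect field of characteristic p, and Λ = W(k) the ring of p-typical Witt vectors of k (so p is a uniformizer of Λ and Λ/pΛ ≅ k). Let X be a locally compact Hausdorff totally disconnected topological space and σ : X → X a homeomorphism with σ^p = id, acting on C_c^∞(X;Λ) by f ↦ f∘σ. Then the map T^0(C_c^∞(X;Λ)) → C_c^∞(X^σ;k), given by restricting a function to the fixed-point set X^σ and reducing its values modulo p, is an isomorphism of abelian groups, and moreover T^1(C_c^∞(X;Λ)) = 0. -/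
/-!
Near a fixed point, the translates of a small compact open set intersect in a compact open
`σ`-invariant neighbourhood, on which the norm `N = ∑ σⁱ` of an invariant function is
multiplication by `p`. Away from the fixed points the action is free, and every compact open
invariant set `K` has a compact open fundamental domain `V`, built greedily from wandering
neighbourhoods: an invariant function on `K` is the norm of its restriction to `V`, and a
function on `K` with vanishing norm is `g - g ∘ σ`, where `g x` sums `f` along the orbit of `x`
until it enters `V`. Hence `T⁰` only sees the values at fixed points modulo `p`, and `T¹`
vanishes in the absence of `p`-torsion. For `W(k)` with `k` perfect, `p W(k)` is the kernel of
the zeroth coefficient and `W(k)` has no `p`-torsion.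
-/

open Function Set Topology

namespace PrimeOrderAction

section Dynamics

variable {X : Type*} {σ : X → X} {p : ℕ}

def saturation (σ : X → X) (p : ℕ) (V : Set X) : Set X :=
  ⋃ i ∈ Finset.range p, σ^[i] ⁻¹' V

def core (σ : X → X) (p : ℕ) (V : Set X) : Set X :=
  ⋂ i ∈ Finset.range p, σ^[i] ⁻¹' V

def IsWandering (σ : X → X) (p : ℕ) (V : Set X) : Prop :=
  ∀ v ∈ V, ∀ d, 0 < d → d < p → σ^[d] v ∉ V

def orbitSum {M : Type*} [AddCommMonoid M] (σ : X → X) (p : ℕ) (f : X → M) (x : X) : M :=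
  ∑ i ∈ Finset.range p, f (σ^[i] x)

lemma mem_saturation {V : Set X} {x : X} :
    x ∈ saturation σ p V ↔ ∃ i < p, σ^[i] x ∈ V := by
  simp [saturation]

lemma mem_core {V : Set X} {x : X} : x ∈ core σ p V ↔ ∀ i < p, σ^[i] x ∈ V := by
  simp [core]

lemma subset_saturation (hp : 0 < p) (V : Set X) : V ⊆ saturation σ p V :=
  fun _ hv => mem_saturation.2 ⟨0, hp, hv⟩

lemma core_subset (hp : 0 < p) (V : Set X) : core σ p V ⊆ V :=
  fun _ hv => mem_core.1 hv 0 hp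

lemma saturation_union (U V : Set X) :
    saturation σ p (U ∪ V) = saturation σ p U ∪ saturation σ p V := by
  ext x
  simp only [mem_union, mem_saturation, ← exists_or, ← and_or_left]

lemma iterate_sub_apply (hσ : ∀ x, σ^[p] x = x) {i : ℕ} (hi : i ≤ p) (x : X) :
    σ^[p - i] (σ^[i] x) = x := by
  rw [← iterate_add_apply, Nat.sub_add_cancel hi, hσ]

lemma iterate_pred_apply {n : ℕ} (hn : 0 < n) (x : X) : σ^[n - 1] (σ x) = σ^[n] x := by
  rw [← iterate_succ_apply, Nat.succ_eq_add_one, Nat.sub_add_cancel hn]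

lemma mem_of_iterate_mem (hσ : ∀ x, σ^[p] x = x) {U : Set X} (hU : MapsTo σ U U) {i : ℕ}
    (hi : i ≤ p) {x : X} (h : σ^[i] x ∈ U) : x ∈ U :=
  iterate_sub_apply hσ hi x ▸ hU.iterate (p - i) h

lemma apply_mem_iff (hσ : ∀ x, σ^[p] x = x) (hp : 0 < p) {U : Set X} (hU : MapsTo σ U U)
    {x : X} : σ x ∈ U ↔ x ∈ U :=
  ⟨fun h => mem_of_iterate_mem hσ hU hp h, fun h => hU h⟩

lemma mapsTo_saturation (hσ : ∀ x, σ^[p] x = x) (V : Set X) :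
    MapsTo σ (saturation σ p V) (saturation σ p V) := by
  intro x hx
  obtain ⟨i, hi, hiV⟩ := mem_saturation.1 hx
  rcases Nat.eq_zero_or_pos i with rfl | hi0
  · exact mem_saturation.2 ⟨p - 1, by omega, by rwa [iterate_pred_apply hi, hσ]⟩
  · exact mem_saturation.2 ⟨i - 1, by omega, by rwa [iterate_pred_apply hi0]⟩

lemma mapsTo_core (hσ : ∀ x, σ^[p] x = x) (V : Set X) :
    MapsTo σ (core σ p V) (core σ p V) := by
  intro x hx
  refine mem_core.2 fun i hi => ?_
  rw [← iterate_succ_apply]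
  rcases Nat.lt_or_ge (i + 1) p with h | h
  · exact mem_core.1 hx (i + 1) h
  · rw [show i.succ = p by omega, hσ]
    exact mem_core.1 hx 0 (by omega)

lemma mem_core_of_isFixedPt {V : Set X} {x : X} (hx : IsFixedPt σ x) (hxV : x ∈ V) :
    x ∈ core σ p V :=
  mem_core.2 fun i _ => by rwa [iterate_fixed hx]

lemma iterate_ne_self [Fact p.Prime] (hσ : ∀ x, σ^[p] x = x) {x : X} (hx : ¬IsFixedPt σ x)
    {d : ℕ} (hd0 : 0 < d) (hdp : d < p) : σ^[d] x ≠ x := by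
  have hper : minimalPeriod σ x = p := minimalPeriod_eq_prime (hσ x) hx
  simpa using (iterate_eq_iterate_iff_of_lt_minimalPeriod (f := σ) (x := x) (m := d) (n := 0)
    (hper ▸ hdp) (hper ▸ hd0.trans hdp)).not.2 hd0.ne'

lemma preimage_iterate_eq_image (hσ : ∀ x, σ^[p] x = x) {i : ℕ} (hi : i ≤ p) (V : Set X) :
    σ^[i] ⁻¹' V = σ^[p - i] '' V := by
  ext x
  constructor
  · exact fun hx => ⟨σ^[i] x, hx, iterate_sub_apply hσ hi x⟩
  · rintro ⟨v, hv, rfl⟩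
    rwa [mem_preimage, ← iterate_add_apply, Nat.add_sub_cancel' hi, hσ]

lemma saturation_subset (hσ : ∀ x, σ^[p] x = x) {K V : Set X} (hK : MapsTo σ K K)
    (hVK : V ⊆ K) : saturation σ p V ⊆ K := fun _ hx =>
  let ⟨_, hi, hiV⟩ := mem_saturation.1 hx
  mem_of_iterate_mem hσ hK hi.le (hVK hiV)

lemma IsWandering.mono {U V : Set X} (hV : IsWandering σ p V) (hUV : U ⊆ V) :
    IsWandering σ p U :=
  fun u hu d hd0 hdp h => hV u (hUV hu) d hd0 hdp (hUV h)

lemma IsWandering.index_unique {V : Set X} (hV : IsWandering σ p V) {x : X} {i j : ℕ}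
    (hi : i < p) (hj : j < p) (hiV : σ^[i] x ∈ V) (hjV : σ^[j] x ∈ V) : i = j := by
  wlog hij : i < j generalizing i j
  · rcases (not_lt.1 hij).eq_or_lt with h | h
    · exact h.symm
    · exact (this hj hi hjV hiV h).symm
  refine absurd ?_ (hV _ hiV (j - i) (by omega) (by omega))
  rwa [← iterate_add_apply, Nat.sub_add_cancel hij.le]

lemma IsWandering.union_diff_saturation (hσ : ∀ x, σ^[p] x = x) {U V : Set X}
    (hV : IsWandering σ p V) (hU : IsWandering σ p U) :
    IsWandering σ p (V ∪ (U \ saturation σ p V)) := by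
  rintro v (hv | ⟨hvU, hvV⟩) d hd0 hdp (h | ⟨hU', hV'⟩)
  · exact hV v hv d hd0 hdp h
  · exact hV' (mem_saturation.2 ⟨p - d, by omega, by rwa [iterate_sub_apply hσ hdp.le]⟩)
  · exact hvV (mem_saturation.2 ⟨d, hdp, h⟩)
  · exact hU v hvU d hd0 hdp hU'

lemma apply_iterate_of_invariant {Y : Type*} {f : X → Y} (hf : ∀ x, f (σ x) = f x) (n : ℕ)
    (x : X) : f (σ^[n] x) = f x := by
  induction n generalizing x with
  | zero => rfl
  | succ n ih => rw [iterate_succ_apply, ih, hf]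

lemma sum_indicator_preimage_iterate {M : Type*} [AddCommMonoid M] {V : Set X}
    (hV : IsWandering σ p V) (F : ℕ → X → M) {x : X} {m : ℕ} (hm : m < p)
    (hmV : σ^[m] x ∈ V) :
    ∑ i ∈ Finset.range p, (σ^[i] ⁻¹' V).indicator (F i) x = F m x := by
  rw [Finset.sum_eq_single_of_mem m (Finset.mem_range.2 hm),
    indicator_of_mem (show x ∈ σ^[m] ⁻¹' V from hmV)]
  intro i hi him
  exact indicator_of_notMem (s := σ^[i] ⁻¹' V)
    (fun hiV => him (hV.index_unique (Finset.mem_range.1 hi) hm hiV hmV)) (F i)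

section OrbitSum

variable {M : Type*} [AddCommMonoid M]

lemma orbitSum_add (f g : X → M) :
    orbitSum σ p (f + g) = orbitSum σ p f + orbitSum σ p g := by
  ext x
  exact Finset.sum_add_distrib

lemma orbitSum_of_isFixedPt (f : X → M) {x : X} (hx : IsFixedPt σ x) :
    orbitSum σ p f x = p • f x := by
  simp [orbitSum, iterate_fixed hx]

lemma orbitSum_of_invariant {f : X → M} (hf : ∀ x, f (σ x) = f x) (x : X) :
    orbitSum σ p f x = p • f x := by
  simp [orbitSum, apply_iterate_of_invariant hf]

lemma indicator_apply_of_invariant (hσ : ∀ x, σ^[p] x = x) (hp : 0 < p) {A : Set X}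
    (hA : MapsTo σ A A) {f : X → M} (hf : ∀ x, f (σ x) = f x) (x : X) :
    A.indicator f (σ x) = A.indicator f x := by
  by_cases hx : x ∈ A
  · rw [indicator_of_mem hx, indicator_of_mem (hA hx), hf]
  · rw [indicator_of_notMem hx, indicator_of_notMem (mt (apply_mem_iff hσ hp hA).1 hx)]

lemma orbitSum_indicator_of_isWandering {V : Set X} (hV : IsWandering σ p V) {f : X → M}
    (hf : ∀ x, f (σ x) = f x) :
    orbitSum σ p (V.indicator f) = (saturation σ p V).indicator f := by
  ext x
  by_cases hx : x ∈ saturation σ p V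
  · obtain ⟨m, hm, hmV⟩ := mem_saturation.1 hx
    have := sum_indicator_preimage_iterate hV (fun i => f ∘ σ^[i]) hm hmV
    simp only [indicator_comp_right] at this
    rw [orbitSum, this, indicator_of_mem hx, comp_apply, apply_iterate_of_invariant hf]
  · rw [indicator_of_notMem hx]
    refine Finset.sum_eq_zero fun i hi => indicator_of_notMem (fun hiV => hx ?_) f
    exact mem_saturation.2 ⟨i, Finset.mem_range.1 hi, hiV⟩

lemma sum_range_succ_iterate (f : X → M) (n : ℕ) (x : X) :
    ∑ j ∈ Finset.range (n + 1), f (σ^[j] x) =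
      f x + ∑ j ∈ Finset.range n, f (σ^[j] (σ x)) := by
  simp only [Finset.sum_range_succ', iterate_succ_apply, iterate_zero_apply, add_comm]

end OrbitSum

section OrbitPrimitive

variable {M : Type*} [AddCommGroup M]

/-- At a point `x` whose orbit enters `V` after `m` steps, this is `∑ j < m, f (σ^[j] x)`. -/
noncomputable def orbitPrimitive (σ : X → X) (p : ℕ) (V : Set X) (f : X → M) (x : X) : M :=
  ∑ m ∈ Finset.range p,
    (σ^[m] ⁻¹' V).indicator (fun y => ∑ j ∈ Finset.range m, f (σ^[j] y)) x

lemma orbitPrimitive_apply {V : Set X} (hV : IsWandering σ p V) (f : X → M) {x : X} {m : ℕ}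
    (hm : m < p) (hmV : σ^[m] x ∈ V) :
    orbitPrimitive σ p V f x = ∑ j ∈ Finset.range m, f (σ^[j] x) := by
  rw [orbitPrimitive]
  exact sum_indicator_preimage_iterate hV _ hm hmV

lemma orbitPrimitive_apply_of_notMem (V : Set X) (f : X → M) {x : X}
    (hx : x ∉ saturation σ p V) : orbitPrimitive σ p V f x = 0 := by
  rw [orbitPrimitive]
  refine Finset.sum_eq_zero fun i hi => indicator_of_notMem (fun hiV => hx ?_) _
  exact mem_saturation.2 ⟨i, Finset.mem_range.1 hi, hiV⟩

lemma orbitPrimitive_sub_apply (hσ : ∀ x, σ^[p] x = x) (hp : 0 < p) {V : Set X}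
    (hV : IsWandering σ p V) {f : X → M} (hf : ∀ x ∉ saturation σ p V, f x = 0)
    (hN : ∀ x, orbitSum σ p f x = 0) (x : X) :
    orbitPrimitive σ p V f x - orbitPrimitive σ p V f (σ x) = f x := by
  by_cases hx : x ∈ saturation σ p V
  · obtain ⟨m, hm, hmV⟩ := mem_saturation.1 hx
    rcases Nat.eq_zero_or_pos m with rfl | hm0
    · have hσx : σ^[p - 1] (σ x) ∈ V := by rwa [iterate_pred_apply hp, hσ]
      have hsum := hN x
      rw [orbitSum, ← Nat.sub_add_cancel hp, sum_range_succ_iterate] at hsum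
      rw [orbitPrimitive_apply hV f hm hmV, orbitPrimitive_apply hV f (by omega) hσx,
        Finset.sum_range_zero, eq_neg_of_add_eq_zero_right hsum, zero_sub, neg_neg]
    · have hσx : σ^[m - 1] (σ x) ∈ V := by rwa [iterate_pred_apply hm0]
      rw [orbitPrimitive_apply hV f hm hmV, orbitPrimitive_apply hV f (by omega) hσx,
        ← Nat.sub_add_cancel hm0, sum_range_succ_iterate, Nat.add_sub_cancel,
        add_sub_cancel_right]
  · have hσx : σ x ∉ saturation σ p V :=
      mt (apply_mem_iff hσ hp (mapsTo_saturation hσ V)).1 hx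
    rw [orbitPrimitive_apply_of_notMem V f hx, orbitPrimitive_apply_of_notMem V f hσx, hf x hx,
      sub_zero]

end OrbitPrimitive

end Dynamics

section Topology

variable {X : Type*} [TopologicalSpace X]

lemma exists_mem_nhds_apply_notMem [T2Space X] {g : X → X} (hg : Continuous g) {x : X}
    (hx : g x ≠ x) : ∃ W ∈ 𝓝 x, ∀ y ∈ W, g y ∉ W := by
  obtain ⟨u, v, hu, hv, huv⟩ := t2_separation_nhds hx.symm
  refine ⟨u ∩ g ⁻¹' v, Filter.inter_mem hu (hg.continuousAt.preimage_mem_nhds hv), ?_⟩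
  exact fun y hy hgy => disjoint_left.1 huv hgy.1 hy.2

variable [LocallyCompactSpace X] [T2Space X] [TotallyDisconnectedSpace X]

lemma exists_isCompact_isOpen_mem_subset {x : X} {O : Set X} (hO : IsOpen O) (hx : x ∈ O) :
    ∃ V, IsCompact V ∧ IsOpen V ∧ x ∈ V ∧ V ⊆ O := by
  obtain ⟨K, hK, hxK, hKO⟩ := exists_compact_subset hO hx
  obtain ⟨V, hV, hxV, hVK⟩ :=
    loc_compact_Haus_tot_disc_of_zero_dim.exists_subset_of_mem_open hxK isOpen_interior
  exact ⟨V, hK.of_isClosed_subset hV.1 (hVK.trans interior_subset), hV.2, hxV,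
    (hVK.trans interior_subset).trans hKO⟩

lemma exists_isCompact_isOpen_between {C O : Set X} (hC : IsCompact C) (hO : IsOpen O)
    (hCO : C ⊆ O) : ∃ V, IsCompact V ∧ IsOpen V ∧ C ⊆ V ∧ V ⊆ O := by
  choose! U hUc hUo hxU hUO using fun x (hx : x ∈ C) =>
    exists_isCompact_isOpen_mem_subset hO (hCO hx)
  obtain ⟨t, htC, hCt⟩ := hC.elim_nhds_subcover U fun x hx => (hUo x hx).mem_nhds (hxU x hx)
  exact ⟨⋃ x ∈ t, U x, t.isCompact_biUnion fun x hx => hUc x (htC x hx),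
    isOpen_biUnion fun x hx => hUo x (htC x hx), hCt,
    iUnion₂_subset fun x hx => hUO x (htC x hx)⟩

end Topology

section LocallyConstant

variable {X M : Type*} [TopologicalSpace X]

lemma isLocallyConstant_indicator [Zero M] {U : Set X} (hU : IsClopen U) {f : X → M}
    (hf : IsLocallyConstant f) : IsLocallyConstant (U.indicator f) :=
  (LocallyConstant.indicator ⟨f, hf⟩ hU).isLocallyConstant

lemma isLocallyConstant_finset_sum [AddCommMonoid M] {ι : Type*} (s : Finset ι)
    {F : ι → X → M} (hF : ∀ i ∈ s, IsLocallyConstant (F i)) :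
    IsLocallyConstant fun x => ∑ i ∈ s, F i x := by
  rw [← Finset.sum_fn]
  exact Finset.sum_induction F IsLocallyConstant (fun _ _ hf hg => hf.add hg)
    (IsLocallyConstant.const 0) hF

lemma hasCompactSupport_indicator [T2Space X] [Zero M] {U : Set X} (hU : IsCompact U)
    (f : X → M) : HasCompactSupport (U.indicator f) :=
  HasCompactSupport.intro hU fun _ hx => indicator_of_notMem hx f

lemma isClopen_support [Zero M] {f : X → M} (hf : IsLocallyConstant f) : IsClopen (support f) :=
  (hf.isClopen_fiber 0).compl

lemma isCompact_support [Zero M] {f : X → M} (hf : IsLocallyConstant f)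
    (hfc : HasCompactSupport f) : IsCompact (support f) :=
  IsCompact.of_isClosed_subset hfc (isClopen_support hf).isClosed (subset_tsupport f)

lemma finite_range_of_hasCompactSupport [Zero M] {f : X → M} (hf : IsLocallyConstant f)
    (hfc : HasCompactSupport f) : (range f).Finite := by
  have : CompactSpace (support f) := isCompact_iff_compactSpace.1 (isCompact_support hf hfc)
  have hfS : IsLocallyConstant fun x : support f => f x := hf.comp_continuous continuous_subtype_val
  refine (hfS.range_finite.insert 0).subset ?_
  rintro _ ⟨x, rfl⟩
  by_cases hx : f x = 0
  · exact Or.inl hx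
  · exact Or.inr ⟨⟨x, hx⟩, rfl⟩

end LocallyConstant

section PeriodicTopology

variable {X : Type*} [TopologicalSpace X] {σ : X → X} {p : ℕ}

lemma isCompact_saturation (hσ : ∀ x, σ^[p] x = x) (hc : Continuous σ) {V : Set X}
    (hV : IsCompact V) : IsCompact (saturation σ p V) :=
  (Finset.range p).isCompact_biUnion fun i hi => by
    rw [preimage_iterate_eq_image hσ (Finset.mem_range.1 hi).le]
    exact hV.image (hc.iterate _)

lemma isOpen_saturation (hc : Continuous σ) {V : Set X} (hV : IsOpen V) :
    IsOpen (saturation σ p V) :=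
  isOpen_biUnion fun i _ => hV.preimage (hc.iterate i)

lemma isOpen_core (hc : Continuous σ) {V : Set X} (hV : IsOpen V) : IsOpen (core σ p V) :=
  isOpen_biInter_finset fun i _ => hV.preimage (hc.iterate i)

lemma isClosed_core (hc : Continuous σ) {V : Set X} (hV : IsClosed V) : IsClosed (core σ p V) :=
  isClosed_biInter fun i _ => hV.preimage (hc.iterate i)

lemma isLocallyConstant_orbitPrimitive {M : Type*} [AddCommGroup M] (hc : Continuous σ)
    {V : Set X} (hV : IsClopen V) {f : X → M} (hf : IsLocallyConstant f) :
    IsLocallyConstant (orbitPrimitive σ p V f) :=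
  isLocallyConstant_finset_sum _ fun m _ => isLocallyConstant_indicator
    (hV.preimage (hc.iterate m))
    (isLocallyConstant_finset_sum _ fun j _ => hf.comp_continuous (hc.iterate j))

lemma exists_isWandering_mem_nhds [Fact p.Prime] [T2Space X] (hσ : ∀ x, σ^[p] x = x)
    (hc : Continuous σ) {x : X} (hx : ¬IsFixedPt σ x) :
    ∃ W ∈ 𝓝 x, IsWandering σ p W := by
  choose! W hW hWd using fun d (hd : d ∈ Finset.Ioo 0 p) =>
    exists_mem_nhds_apply_notMem (hc.iterate d)
      (iterate_ne_self hσ hx (Finset.mem_Ioo.1 hd).1 (Finset.mem_Ioo.1 hd).2)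
  refine ⟨⋂ d ∈ Finset.Ioo 0 p, W d, (Filter.biInter_finset_mem _).2 hW, ?_⟩
  intro y hy d hd0 hdp hdy
  have hd : d ∈ Finset.Ioo 0 p := Finset.mem_Ioo.2 ⟨hd0, hdp⟩
  exact hWd d hd y (mem_iInter₂.1 hy d hd) (mem_iInter₂.1 hdy d hd)

lemma exists_isWandering_subset_saturation [T2Space X] (hσ : ∀ x, σ^[p] x = x) (hp : 0 < p)
    (hc : Continuous σ) {K : Set X} {ι : Type*} (t : Finset ι) (U : ι → Set X)
    (hU : ∀ i ∈ t, IsCompact (U i) ∧ IsOpen (U i) ∧ IsWandering σ p (U i) ∧ U i ⊆ K) :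
    ∃ V, IsCompact V ∧ IsOpen V ∧ IsWandering σ p V ∧ V ⊆ K ∧
      ⋃ i ∈ t, U i ⊆ saturation σ p V := by
  classical
  induction t using Finset.induction_on with
  | empty =>
    exact ⟨∅, isCompact_empty, isOpen_empty, fun _ h => h.elim, empty_subset _, by simp⟩
  | insert j t _ ih =>
    obtain ⟨V, hVc, hVo, hVw, hVK, htV⟩ := ih fun i hi => hU i (Finset.mem_insert_of_mem hi)
    obtain ⟨hUc, hUo, hUw, hUK⟩ := hU j (Finset.mem_insert_self j t)
    have hSc := isCompact_saturation hσ hc hVc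
    have hSo := isOpen_saturation (p := p) hc hVo
    refine ⟨V ∪ (U j \ saturation σ p V), hVc.union (hUc.diff hSo),
      hVo.union (hUo.sdiff hSc.isClosed), hVw.union_diff_saturation hσ hUw,
      union_subset hVK (sdiff_subset.trans hUK), ?_⟩
    rw [Finset.set_biUnion_insert, saturation_union]
    intro x hx
    by_cases hxS : x ∈ saturation σ p V
    · exact Or.inl hxS
    · rcases hx with hx | hx
      · exact Or.inr (subset_saturation hp _ ⟨hx, hxS⟩)
      · exact absurd (htV hx) hxS

variable [LocallyCompactSpace X] [T2Space X] [TotallyDisconnectedSpace X]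

lemma exists_mapsTo_isCompact_isOpen_between (hσ : ∀ x, σ^[p] x = x) (hp : 0 < p)
    (hc : Continuous σ) {C O : Set X} (hC : IsCompact C) (hCfix : ∀ x ∈ C, IsFixedPt σ x)
    (hO : IsOpen O) (hCO : C ⊆ O) :
    ∃ A, IsCompact A ∧ IsOpen A ∧ MapsTo σ A A ∧ C ⊆ A ∧ A ⊆ O := by
  obtain ⟨V, hVc, hVo, hCV, hVO⟩ := exists_isCompact_isOpen_between hC hO hCO
  exact ⟨core σ p V, hVc.of_isClosed_subset (isClosed_core hc hVc.isClosed) (core_subset hp V),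
    isOpen_core hc hVo, mapsTo_core hσ V, fun x hx => mem_core_of_isFixedPt (hCfix x hx) (hCV hx),
    (core_subset hp V).trans hVO⟩

lemma exists_isWandering_isCompact_isOpen_mem_subset [Fact p.Prime] (hσ : ∀ x, σ^[p] x = x)
    (hc : Continuous σ) {x : X} (hx : ¬IsFixedPt σ x) {O : Set X} (hO : IsOpen O)
    (hxO : x ∈ O) :
    ∃ U, IsCompact U ∧ IsOpen U ∧ IsWandering σ p U ∧ x ∈ U ∧ U ⊆ O := by
  obtain ⟨W, hW, hWw⟩ := exists_isWandering_mem_nhds hσ hc hx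
  obtain ⟨T, hTW, hTo, hxT⟩ := mem_nhds_iff.1 (Filter.inter_mem hW (hO.mem_nhds hxO))
  obtain ⟨U, hUc, hUo, hxU, hUT⟩ := exists_isCompact_isOpen_mem_subset hTo hxT
  exact ⟨U, hUc, hUo, hWw.mono fun y hy => (hTW (hUT hy)).1, hxU, fun y hy => (hTW (hUT hy)).2⟩

lemma exists_isWandering_saturation_eq [Fact p.Prime] (hσ : ∀ x, σ^[p] x = x)
    (hc : Continuous σ) {K : Set X} (hKc : IsCompact K) (hKo : IsOpen K) (hK : MapsTo σ K K)
    (hfree : ∀ x ∈ K, ¬IsFixedPt σ x) :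
    ∃ V, IsCompact V ∧ IsOpen V ∧ IsWandering σ p V ∧ saturation σ p V = K := by
  choose! U hUc hUo hUw hxU hUK using fun x (hx : x ∈ K) =>
    exists_isWandering_isCompact_isOpen_mem_subset hσ hc (hfree x hx) hKo hx
  obtain ⟨t, htK, hKt⟩ := hKc.elim_nhds_subcover U fun x hx => (hUo x hx).mem_nhds (hxU x hx)
  obtain ⟨V, hVc, hVo, hVw, hVK, htV⟩ := exists_isWandering_subset_saturation hσ
    (Fact.out : p.Prime).pos hc t U fun x hx =>
      ⟨hUc x (htK x hx), hUo x (htK x hx), hUw x (htK x hx), hUK x (htK x hx)⟩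
  exact ⟨V, hVc, hVo, hVw, (saturation_subset hσ hK hVK).antisymm (hKt.trans htV)⟩

end PeriodicTopology

section Witt

variable {p : ℕ} [Fact p.Prime] {k : Type*} [CommRing k]

lemma constantCoeff_surjective : Surjective (WittVector.constantCoeff : WittVector p k → k) :=
  fun c => ⟨WittVector.teichmuller p c, WittVector.teichmuller_coeff_zero p c⟩

variable [CharP k p]

lemma coeff_zero_p_nsmul (w : WittVector p k) : (p • w).coeff 0 = 0 := by
  rw [nsmul_eq_mul, mul_comm]
  exact WittVector.mul_charP_coeff_zero w

variable [PerfectRing k p]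

lemma exists_p_nsmul_eq_of_coeff_zero {a : WittVector p k} (ha : a.coeff 0 = 0) :
    ∃ b, p • b = a := by
  obtain ⟨b, hb⟩ := Ideal.mem_span_singleton'.1
    ((WittVector.mem_span_p_iff_coeff_zero_eq_zero a).2 ha)
  exact ⟨b, by rw [nsmul_eq_mul, mul_comm, hb]⟩

lemma eq_zero_of_p_nsmul_eq_zero {w : WittVector p k} (h : p • w = 0) : w = 0 :=
  WittVector.eq_zero_of_p_mul_eq_zero w (by rwa [nsmul_eq_mul, mul_comm] at h)

end Witt

section CompactlySupported

variable {X : Type*} [TopologicalSpace X] [LocallyCompactSpace X] [T2Space X]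
  [TotallyDisconnectedSpace X] {σ : X → X} {p : ℕ}

lemma exists_mapsTo_preimage_val_eq (hσ : ∀ x, σ^[p] x = x) (hp : 0 < p) (hc : Continuous σ)
    {C : Set {x // σ x = x}} (hCc : IsCompact C) (hCo : IsOpen C) :
    ∃ U : Set X, IsCompact U ∧ IsOpen U ∧ MapsTo σ U U ∧ Subtype.val ⁻¹' U = C := by
  obtain ⟨O, hO, rfl⟩ := isOpen_induced_iff.1 hCo
  obtain ⟨U, hUc, hUo, hUσ, hCU, hUO⟩ := exists_mapsTo_isCompact_isOpen_between hσ hp hc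
    (hCc.image continuous_subtype_val) (by rintro _ ⟨y, -, rfl⟩; exact y.2) hO
    (image_preimage_subset _ _)
  exact ⟨U, hUc, hUo, hUσ, (preimage_mono hUO).antisymm fun y hy => hCU ⟨y, hy, rfl⟩⟩

theorem exists_invariant_lift (hσ : ∀ x, σ^[p] x = x) (hp : 0 < p) (hc : Continuous σ)
    {M N : Type*} [AddCommMonoid M] [AddCommMonoid N] (φ : M →+ N) (hφ : Surjective φ)
    {h : {x // σ x = x} → N} (hh : IsLocallyConstant h) (hhc : HasCompactSupport h) :
    ∃ f : X → M, IsLocallyConstant f ∧ HasCompactSupport f ∧ (∀ x, f (σ x) = f x) ∧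
      ∀ x : {x // σ x = x}, φ (f x.1) = h x := by
  classical
  -- `h` is a finite sum of multiples of the indicators of its nonzero fibres, and each fibre is
  -- the trace on the fixed points of a compact open invariant subset of `X`.
  choose! U hUc hUo hUσ hUh using fun c (hc0 : c ≠ 0) =>
    exists_mapsTo_preimage_val_eq hσ hp hc
      ((isCompact_support hh hhc).of_isClosed_subset (hh.isClosed_fiber c)
        fun x (hx : h x = c) => (hx ▸ hc0 : h x ≠ 0)) (hh.isOpen_fiber c)
  set T := ((finite_range_of_hasCompactSupport hh hhc).sdiff (t := {0})).toFinset
  have hT : ∀ c ∈ T, c ≠ 0 := fun c hc => ((Set.Finite.mem_toFinset _).1 hc).2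
  refine ⟨fun x => ∑ c ∈ T, (U c).indicator (fun _ => surjInv hφ c) x,
    isLocallyConstant_finset_sum T fun c hcT => isLocallyConstant_indicator
      ⟨(hUc c (hT c hcT)).isClosed, hUo c (hT c hcT)⟩ (IsLocallyConstant.const _), ?_, ?_, ?_⟩
  · rw [← Finset.sum_fn]
    exact HasCompactSupport.finset_sum fun c hcT => hasCompactSupport_indicator (hUc c (hT c hcT)) _
  · exact fun x => Finset.sum_congr rfl fun c hcT =>
      indicator_apply_of_invariant hσ hp (hUσ c (hT c hcT)) (fun _ => rfl) x
  · intro x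
    have hterm : ∀ c ∈ T, φ ((U c).indicator (fun _ => surjInv hφ c) x.1) =
        if h x = c then c else 0 := fun c hcT => by
      rw [map_indicator, indicator_apply]
      simp only [comp_apply, surjInv_eq]
      congr 1
      exact propext (Set.ext_iff.1 (hUh c (hT c hcT)) x)
    rw [map_sum, Finset.sum_congr rfl hterm, Finset.sum_ite_eq, ite_eq_left_iff]
    intro hxT
    by_contra hx0
    exact hxT ((Set.Finite.mem_toFinset _).2 ⟨mem_range_self x, Ne.symm hx0⟩)

theorem exists_orbitSum_eq [Fact p.Prime] {M : Type*} [AddCommMonoid M]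
    (hσ : ∀ x, σ^[p] x = x) (hc : Continuous σ) {f : X → M} (hf : IsLocallyConstant f)
    (hfc : HasCompactSupport f) (hfσ : ∀ x, f (σ x) = f x)
    (hdiv : ∀ x, σ x = x → ∃ m, p • m = f x) :
    ∃ g : X → M, IsLocallyConstant g ∧ HasCompactSupport g ∧
      ∀ x, f x = orbitSum σ p g x := by
  have hp := (Fact.out : p.Prime).pos
  have hS := isClopen_support hf
  have hSc := isCompact_support hf hfc
  have hSσ : MapsTo σ (support f) (support f) := fun x hx => by rwa [mem_support, hfσ]
  -- Near the fixed points `f` is divisible by `p` on an invariant set `A`; off `A` the action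
  -- on the support of `f` is free.
  obtain ⟨A, hAc, hAo, hAσ, hFixA, hAS⟩ := exists_mapsTo_isCompact_isOpen_between hσ hp hc
    (hSc.inter_right (isClosed_eq hc continuous_id)) (fun x hx => hx.2)
    (hS.isOpen.inter (hf {a | ∃ m, p • m = a})) (fun x hx => ⟨hx.1, hdiv x hx.2⟩)
  have hBσ : MapsTo σ (support f \ A) (support f \ A) :=
    fun x hx => ⟨hSσ hx.1, mt (apply_mem_iff hσ hp hAσ).1 hx.2⟩
  obtain ⟨V, hVc, hVo, hVw, hVB⟩ := exists_isWandering_saturation_eq hσ hc (hSc.diff hAo)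
    (hS.isOpen.sdiff hAc.isClosed) hBσ fun x hx hfix => hx.2 (hFixA ⟨hx.1, hfix⟩)
  choose! q hq using fun (a : M) (ha : ∃ m : M, p • m = a) => ha
  refine ⟨A.indicator (q ∘ f) + V.indicator f,
    (isLocallyConstant_indicator ⟨hAc.isClosed, hAo⟩ (hf.comp q)).add
      (isLocallyConstant_indicator ⟨hVc.isClosed, hVo⟩ hf),
    (hasCompactSupport_indicator hAc _).add (hasCompactSupport_indicator hVc _), fun x => ?_⟩
  rw [orbitSum_add, Pi.add_apply, orbitSum_of_invariant
    (indicator_apply_of_invariant hσ hp hAσ fun y => by simp [hfσ]),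
    orbitSum_indicator_of_isWandering hVw hfσ, hVB]
  by_cases hxA : x ∈ A
  · rw [indicator_of_mem hxA, comp_apply, hq _ (hAS hxA).2,
      indicator_of_notMem fun h => h.2 hxA, add_zero]
  · rw [indicator_of_notMem hxA, smul_zero, zero_add]
    by_cases hxS : x ∈ support f
    · rw [indicator_of_mem (show x ∈ support f \ A from ⟨hxS, hxA⟩)]
    · rw [indicator_of_notMem fun h => hxS h.1, notMem_support.1 hxS]

theorem exists_eq_sub_comp [Fact p.Prime] {M : Type*} [AddCommGroup M]
    (hM : ∀ m : M, p • m = 0 → m = 0) (hσ : ∀ x, σ^[p] x = x) (hc : Continuous σ)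
    {f : X → M} (hf : IsLocallyConstant f) (hfc : HasCompactSupport f)
    (hN : ∀ x, orbitSum σ p f x = 0) :
    ∃ g : X → M, IsLocallyConstant g ∧ HasCompactSupport g ∧
      ∀ x, f x = g x - g (σ x) := by
  have hp := (Fact.out : p.Prime).pos
  have hfree : ∀ x ∈ saturation σ p (support f), ¬IsFixedPt σ x := by
    intro x hx hfix
    obtain ⟨i, -, hi⟩ := mem_saturation.1 hx
    rw [iterate_fixed hfix] at hi
    exact hi (hM _ (orbitSum_of_isFixedPt f hfix ▸ hN x))
  obtain ⟨V, hVc, hVo, hVw, hVK⟩ := exists_isWandering_saturation_eq hσ hc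
    (isCompact_saturation hσ hc (isCompact_support hf hfc))
    (isOpen_saturation hc (isClopen_support hf).isOpen) (mapsTo_saturation hσ _) hfree
  have hf0 : ∀ x ∉ saturation σ p V, f x = 0 := fun x hx =>
    notMem_support.1 fun h => hx (hVK ▸ subset_saturation hp _ h)
  exact ⟨orbitPrimitive σ p V f,
    isLocallyConstant_orbitPrimitive hc (V := V) ⟨hVc.isClosed, hVo⟩ hf,
    HasCompactSupport.intro (isCompact_saturation hσ hc hVc)
      fun x hx => orbitPrimitive_apply_of_notMem V f hx,
    fun x => (orbitPrimitive_sub_apply hσ hp hVw hf0 hN x).symm⟩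

end CompactlySupported

end PrimeOrderAction

open PrimeOrderAction

/--
Let `p` be a prime, `k` a perfect field of characteristic `p`, and `Λ = W(k)` the ring of
`p`-typical Witt vectors of `k` (reduction mod `p` being the zeroth-coefficient map
`W(k) → k`).  Let `X` be a locally compact Hausdorff totally disconnected space and
`σ : X ≃ₜ X` with `σ^p = id`, acting on `C_c^∞(X;Λ)` by `f ↦ f ∘ σ`.  Then the map
`T⁰(C_c^∞(X;Λ)) → C_c^∞(X^σ;k)` given by restricting to the fixed-point set and reducing
mod `p` is an isomorphism of abelian groups, and `T¹(C_c^∞(X;Λ)) = 0`.  As in the previous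
statement this is expressed elementwise (the map is additive by construction).
-/
theorem tate_ccInfty_witt
    (p : ℕ) [Fact p.Prime]
    (k : Type*) [Field k] [CharP k p] [PerfectField k]
    (X : Type*) [TopologicalSpace X] [LocallyCompactSpace X] [T2Space X]
    [TotallyDisconnectedSpace X]
    (σ : X ≃ₜ X) (hσ : ∀ x, (⇑σ)^[p] x = x) :
    -- reduced restriction lands in C_c^∞(X^σ; k)
    ((∀ f : X → WittVector p k, IsLocallyConstant f → HasCompactSupport f →
        IsLocallyConstant (fun x : {x : X // σ x = x} => (f x.1).coeff 0) ∧
        HasCompactSupport (fun x : {x : X // σ x = x} => (f x.1).coeff 0))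
    -- T⁰: the reduced restriction kills the image of the norm map
    ∧ (∀ g : X → WittVector p k, IsLocallyConstant g → HasCompactSupport g →
        ∀ x : X, σ x = x →
          ((∑ i ∈ Finset.range p, g ((⇑σ)^[i] x)).coeff 0) = 0)
    -- T⁰: injectivity of the induced map
    ∧ (∀ f : X → WittVector p k, IsLocallyConstant f → HasCompactSupport f →
        (∀ x, f (σ x) = f x) → (∀ x : X, σ x = x → (f x).coeff 0 = 0) →
        ∃ g : X → WittVector p k, IsLocallyConstant g ∧ HasCompactSupport g ∧
          ∀ x, f x = ∑ i ∈ Finset.range p, g ((⇑σ)^[i] x))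
    -- T⁰: surjectivity of the induced map
    ∧ (∀ h : {x : X // σ x = x} → k, IsLocallyConstant h → HasCompactSupport h →
        ∃ f : X → WittVector p k, IsLocallyConstant f ∧ HasCompactSupport f ∧
          (∀ x, f (σ x) = f x) ∧ ∀ x : {x : X // σ x = x}, (f x.1).coeff 0 = h x)
    -- T¹(C_c^∞(X;Λ)) = 0
    ∧ (∀ f : X → WittVector p k, IsLocallyConstant f → HasCompactSupport f →
        (∀ x, (∑ i ∈ Finset.range p, f ((⇑σ)^[i] x)) = 0) →
        ∃ g : X → WittVector p k, IsLocallyConstant g ∧ HasCompactSupport g ∧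
          ∀ x, f x = g x - g (σ x))) := by
  have hc := σ.continuous
  refine ⟨fun f hf hfc => ⟨?_, ?_⟩, fun g _ _ x hx => ?_, fun f hf hfc hfσ h0 => ?_,
    fun h hh hhc => ?_, fun f hf hfc hN => ?_⟩
  · exact (hf.comp_continuous continuous_subtype_val).comp (WittVector.coeff · 0)
  · exact (hfc.comp_isClosedEmbedding (isClosed_eq hc continuous_id).isClosedEmbedding_subtypeVal
      ).comp_left (g := (WittVector.coeff · 0)) (WittVector.zero_coeff p k 0)
  · change (orbitSum σ p g x).coeff 0 = 0
    rw [orbitSum_of_isFixedPt g hx]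
    exact coeff_zero_p_nsmul (g x)
  · exact exists_orbitSum_eq hσ hc hf hfc hfσ fun x hx =>
      exists_p_nsmul_eq_of_coeff_zero (h0 x hx)
  · exact exists_invariant_lift hσ (Fact.out : p.Prime).pos hc
      WittVector.constantCoeff.toAddMonoidHom constantCoeff_surjective hh hhc
  · exact exists_eq_sub_comp (fun _ => eq_zero_of_p_nsmul_eq_zero) hσ hc hf hfc hN
end

section
/- Let p be a prime, X a compact Hausdorff totally disconnected topological space, and σ : X → X a homeomorphism with σ^p = id and with no fixed points (σ(x) ≠ x for all x ∈ X; since p is prime, every ⟨σ⟩-orbit then has exactly p elements). Then there exists a clopen subset F ⊆ X such that X is the disjoint union of the sets F, σ(F), σ²(F), …, σ^{p−1}(F). -/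
/-!
Every point `x` has a clopen neighbourhood disjoint from all its nontrivial translates: separate
`x` from each `g • x` by a clopen set `W` and pass to `W \ g⁻¹ • W`. By compactness finitely many
such sets cover `X`, and two of them, `F₁` and `F₂`, merge into one by adding to `F₁` the part of
`F₂` outside the orbit of `F₁`. This applies to the group generated by `σ`, which has order `p`
and acts freely because the stabilizer of a point is a proper subgroup of a group of prime order.
-/

open Set Function Pointwise Subgroup

section FundamentalDomain

variable {G X : Type*} [Group G] [MulAction G X]

theorem smul_iUnion_smul (g : G) (s : Set X) : g • ⋃ h : G, h • s = ⋃ h : G, h • s := by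
  simp_rw [smul_set_iUnion, smul_smul]
  exact (Equiv.mulLeft g).surjective.iUnion_comp (· • s)

variable [TopologicalSpace X] [ContinuousConstSMul G X]

theorem IsClopen.smul {s : Set X} (hs : IsClopen s) (g : G) : IsClopen (g • s) :=
  ⟨hs.isClosed.smul g, hs.isOpen.smul g⟩

theorem isClopen_iUnion_smul [Finite G] {s : Set X} (hs : IsClopen s) :
    IsClopen (⋃ g : G, g • s) :=
  isClopen_iUnion_of_finite fun g => hs.smul g

theorem exists_isClopen_mem_disjoint_smul [TotallySeparatedSpace X] {g : G} {x : X}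
    (hx : g • x ≠ x) : ∃ U : Set X, IsClopen U ∧ x ∈ U ∧ Disjoint (g • U) U := by
  obtain ⟨W, hW, hxW, hgxW⟩ := exists_isClopen_of_totally_separated hx.symm
  refine ⟨W \ g⁻¹ • W, hW.diff (hW.smul _), ⟨hxW, ?_⟩, ?_⟩
  · rwa [mem_smul_set_iff_inv_smul_mem, inv_inv]
  · rw [smul_set_sdiff, smul_smul, mul_inv_cancel, one_smul]
    exact disjoint_sdiff_left.mono_right sdiff_subset

theorem exists_isClopen_mem_forall_disjoint_smul [Finite G] [TotallySeparatedSpace X] {x : X}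
    (hx : ∀ g : G, g ≠ 1 → g • x ≠ x) :
    ∃ U : Set X, IsClopen U ∧ x ∈ U ∧ ∀ g : G, g ≠ 1 → Disjoint (g • U) U := by
  have hU (g : G) : ∃ U : Set X, IsClopen U ∧ x ∈ U ∧ (g ≠ 1 → Disjoint (g • U) U) := by
    by_cases hg : g = 1
    · exact ⟨univ, isClopen_univ, mem_univ x, (absurd hg ·)⟩
    · obtain ⟨U, hU, hxU, hgU⟩ := exists_isClopen_mem_disjoint_smul (hx g hg)
      exact ⟨U, hU, hxU, fun _ => hgU⟩
  choose U hU hxU hgU using hU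
  refine ⟨⋂ g, U g, isClopen_iInter_of_finite hU, mem_iInter.2 hxU, fun g hg => ?_⟩
  exact (hgU g hg).mono (smul_set_mono (iInter_subset U g)) (iInter_subset U g)

theorem exists_isClopen_forall_disjoint_smul_merge [Finite G] {F₁ F₂ : Set X}
    (hF₁ : IsClopen F₁) (hF₂ : IsClopen F₂) (hd₁ : ∀ g : G, g ≠ 1 → Disjoint (g • F₁) F₁)
    (hd₂ : ∀ g : G, g ≠ 1 → Disjoint (g • F₂) F₂) :
    ∃ F : Set X, IsClopen F ∧ (∀ g : G, g ≠ 1 → Disjoint (g • F) F) ∧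
      (⋃ g : G, g • F₁) ∪ (⋃ g : G, g • F₂) ⊆ ⋃ g : G, g • F := by
  set S := ⋃ g : G, g • F₁
  have hSF₁ (g : G) : g • F₁ ⊆ S := subset_iUnion (· • F₁) g
  have hF₁S : F₁ ⊆ S := by simpa using hSF₁ 1
  refine ⟨F₁ ∪ (F₂ \ S), hF₁.union (hF₂.diff (isClopen_iUnion_smul hF₁)), fun g hg => ?_, ?_⟩
  · rw [smul_set_union, smul_set_sdiff, smul_iUnion_smul]
    refine disjoint_union_left.2 ⟨disjoint_union_right.2 ⟨hd₁ g hg, ?_⟩,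
      disjoint_union_right.2 ⟨?_, (hd₂ g hg).mono sdiff_subset sdiff_subset⟩⟩
    · exact disjoint_sdiff_right.mono_left (hSF₁ g)
    · exact disjoint_sdiff_left.mono_right hF₁S
  · have hS : S ⊆ ⋃ g : G, g • (F₁ ∪ (F₂ \ S)) :=
      iUnion_mono fun g => smul_set_mono subset_union_left
    refine union_subset hS (iUnion_subset fun g => ?_)
    rintro _ ⟨z, hz, rfl⟩
    by_cases hzS : z ∈ S
    · exact hS ((smul_iUnion_smul g F₁).subset (smul_mem_smul_set hzS))
    · exact mem_iUnion.2 ⟨g, smul_mem_smul_set (Or.inr ⟨hz, hzS⟩)⟩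

theorem exists_isClopen_fundamentalDomain [Finite G] [CompactSpace X] [TotallySeparatedSpace X]
    (hfree : ∀ g : G, g ≠ 1 → ∀ x : X, g • x ≠ x) :
    ∃ F : Set X, IsClopen F ∧ Pairwise (fun g h : G => Disjoint (g • F) (h • F)) ∧
      ⋃ g : G, g • F = univ := by
  suffices ∃ F : Set X, IsClopen F ∧ (∀ g : G, g ≠ 1 → Disjoint (g • F) F) ∧
      univ ⊆ ⋃ g : G, g • F by
    obtain ⟨F, hF, hdisj, hcover⟩ := this
    refine ⟨F, hF, fun g h hgh => ?_, univ_subset_iff.1 hcover⟩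
    show Disjoint _ _
    rw [← disjoint_smul_set (a := h⁻¹), smul_smul, smul_smul, inv_mul_cancel, one_smul]
    exact hdisj _ (by rwa [Ne, inv_mul_eq_one, eq_comm])
  refine isCompact_univ.induction_on ?empty ?mono ?union ?nhds
  case empty => exact ⟨∅, isClopen_empty, by simp, empty_subset _⟩
  case mono =>
    rintro s t hst ⟨F, hF, hdisj, hcover⟩
    exact ⟨F, hF, hdisj, hst.trans hcover⟩
  case union =>
    rintro s t ⟨F₁, hF₁, hd₁, hs⟩ ⟨F₂, hF₂, hd₂, ht⟩
    obtain ⟨F, hF, hd, hcover⟩ := exists_isClopen_forall_disjoint_smul_merge hF₁ hF₂ hd₁ hd₂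
    exact ⟨F, hF, hd, (union_subset_union hs ht).trans hcover⟩
  case nhds =>
    intro x _
    obtain ⟨U, hU, hxU, hdisj⟩ :=
      exists_isClopen_mem_forall_disjoint_smul fun g hg => hfree g hg x
    refine ⟨U, mem_nhdsWithin_of_mem_nhds (hU.isOpen.mem_nhds hxU), U, hU, hdisj, ?_⟩
    simpa using subset_iUnion (· • U) (1 : G)

end FundamentalDomain

theorem smul_ne_self_of_mem_zpowers {G X : Type*} [Group G] [MulAction G X] {a : G}
    (ha : (orderOf a).Prime) (hfree : ∀ x : X, a • x ≠ x) {g : zpowers a} (hg : g ≠ 1) (x : X) :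
    g • x ≠ x := by
  have : Fact (Nat.card (zpowers a)).Prime := ⟨by rwa [Nat.card_zpowers]⟩
  intro hgx
  rcases (MulAction.stabilizer (zpowers a) x).eq_bot_or_eq_top_of_prime_card with h | h
  · exact hg (by simpa [h] using MulAction.mem_stabilizer_iff.2 hgx)
  · have hstab : (⟨a, mem_zpowers a⟩ : zpowers a) ∈ MulAction.stabilizer (zpowers a) x :=
      h ▸ mem_top _
    exact hfree x hstab

namespace Homeomorph

variable {X : Type*} [TopologicalSpace X]

instance applyMulAction : MulAction (X ≃ₜ X) X where
  smul f x := f x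
  one_smul _ := rfl
  mul_smul _ _ _ := rfl

instance : ContinuousConstSMul (X ≃ₜ X) X := ⟨fun f => f.continuous⟩

theorem coe_pow (f : X ≃ₜ X) (n : ℕ) : ⇑(f ^ n) = (⇑f)^[n] := by
  induction n with
  | zero => rfl
  | succ n ih => rw [pow_succ, iterate_succ, ← ih]; rfl

end Homeomorph

/--
Let `p` be a prime, `X` a compact Hausdorff totally disconnected space, and `σ : X ≃ₜ X`
a homeomorphism with `σ^p = id` and no fixed points.  Then there is a clopen fundamental
domain `F ⊆ X`: the translates `σ^i(F)`, `0 ≤ i < p`, are pairwise disjoint and cover `X`.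
-/
theorem exists_clopen_fundamental_domain
    (p : ℕ) (hp : p.Prime)
    (X : Type*) [TopologicalSpace X] [CompactSpace X] [T2Space X]
    [TotallyDisconnectedSpace X]
    (σ : X ≃ₜ X) (hσ : ∀ x, (⇑σ)^[p] x = x) (hfree : ∀ x : X, σ x ≠ x) :
    ∃ F : Set X, IsClopen F ∧
      (∀ i j : ℕ, i < p → j < p → i ≠ j →
        Disjoint ((⇑σ)^[i] '' F) ((⇑σ)^[j] '' F)) ∧
      (⋃ i ∈ Finset.range p, (⇑σ)^[i] '' F) = Set.univ := by
  rcases isEmpty_or_nonempty X with hX | ⟨⟨x₀⟩⟩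
  · exact ⟨∅, isClopen_empty, by simp, eq_univ_of_forall isEmptyElim⟩
  have hσp : σ ^ p = 1 := Homeomorph.ext fun x => by rw [Homeomorph.coe_pow, hσ]; rfl
  have : Fact p.Prime := ⟨hp⟩
  have horder : orderOf σ = p := orderOf_eq_prime hσp fun h => hfree x₀ (by rw [h]; rfl)
  have hfin : IsOfFinOrder σ := orderOf_pos_iff.1 (horder ▸ hp.pos)
  have : Finite (zpowers σ) := Finite.of_equiv _ (finEquivZPowers hfin)
  have : ContinuousConstSMul (zpowers σ) X := ⟨fun g => (g : X ≃ₜ X).continuous⟩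
  obtain ⟨F, hF, hdisj, hcover⟩ := exists_isClopen_fundamentalDomain (G := zpowers σ) (X := X)
    fun g hg => smul_ne_self_of_mem_zpowers (horder ▸ hp) hfree hg
  have hpow (i : ℕ) : (⇑σ)^[i] '' F = (⟨σ ^ i, pow_mem (mem_zpowers σ) i⟩ : zpowers σ) • F := by
    rw [← Homeomorph.coe_pow]; rfl
  refine ⟨F, hF, fun i j hi hj hij => ?_, eq_univ_of_forall fun y => ?_⟩
  · rw [hpow, hpow]
    refine hdisj fun h => hij (pow_injOn_Iio_orderOf (horder ▸ hi) (horder ▸ hj) ?_)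
    exact congrArg Subtype.val h
  · obtain ⟨g, hy⟩ := mem_iUnion.1 (hcover ▸ mem_univ y)
    obtain ⟨n, rfl⟩ := (finEquivZPowers hfin).surjective g
    rw [finEquivZPowers_apply, ← hpow] at hy
    exact mem_iUnion₂.2 ⟨n, Finset.mem_range.2 (horder ▸ n.2), hy⟩
end

section
/- Let p be a prime, A a commutative ring, and σ a ring automorphism of A with σ^p = id. Then: (1) the image N(A) of the norm map is an ideal of the fixed subring A^σ; and (2) the map A → A^σ/N(A) sending a to the class of the product σ^0(a)·σ^1(a)·…·σ^{p−1}(a) is a ring homomorphism. -/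
/-!
Write `F t = ∏_{i ∈ t} σⁱ a * ∏_{i ∉ t} σⁱ b` for `t ⊆ Fin p = ℤ/p`, so that
`∏ᵢ σⁱ (a + b) = ∑_t F t` and `σ (F t) = F (t + 1)`. A stabiliser of the translation action of
`ℤ/p` is trivial or everything, so the action is free on the subsets other than `∅` and `univ`:
their terms group into orbits of length `p`, each summing to a norm, while `F ∅` and `F univ` are
the products for `b` and `a`. The norm is `A^σ`-linear, so its image is an ideal of `A^σ`.
-/

open Finset Pointwise

/-- The fixed subring `A^σ` of a ring automorphism `σ` of a commutative ring `A`. -/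
def fixedSubring {A : Type*} [CommRing A] (σ : A ≃+* A) : Subring A where
  carrier := {a : A | σ a = a}
  zero_mem' := map_zero σ
  one_mem' := map_one σ
  add_mem' := fun {a b} ha hb => by
    simp only [Set.mem_setOf_eq] at *
    rw [map_add, ha, hb]
  mul_mem' := fun {a b} ha hb => by
    simp only [Set.mem_setOf_eq] at *
    rw [map_mul, ha, hb]
  neg_mem' := fun {a} ha => by
    simp only [Set.mem_setOf_eq] at *
    rw [map_neg, ha]

theorem AddAction.exists_sum_eq_sum_of_free {G X M : Type*} [AddGroup G] [Fintype G]
    [AddAction G X] [Fintype X] [AddCommMonoid M]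
    (τ : G → M →+ M) (f : X → M) (hf : ∀ g x, f (g +ᵥ x) = τ g (f x))
    (hfree : ∀ (g : G) (x : X), g +ᵥ x = x → g = 0) :
    ∃ u, ∑ x, f x = ∑ g, τ g u := by
  classical
  let rep : orbitRel.Quotient G X → X := Quotient.out
  have hbij : Function.Bijective fun q : G × orbitRel.Quotient G X => q.1 +ᵥ rep q.2 := by
    constructor
    · rintro ⟨g, ω⟩ ⟨h, ω'⟩ he
      dsimp only at he
      obtain rfl : ω = ω' := by
        rw [← Quotient.out_eq ω, ← Quotient.out_eq ω']
        exact Quotient.sound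
          ⟨-g + h, show (-g + h) +ᵥ rep ω' = rep ω by rw [add_vadd, ← he, neg_vadd_vadd]⟩
      have hstab : (-h + g) +ᵥ rep ω = rep ω := by rw [add_vadd, he, neg_vadd_vadd]
      rw [neg_add_eq_zero.1 (hfree _ _ hstab)]
    · intro x
      obtain ⟨g, hg⟩ : x ∈ orbit G (rep ⟦x⟧) :=
        orbitRel_apply.1 (Quotient.exact (Quotient.out_eq ⟦x⟧).symm)
      exact ⟨(g, ⟦x⟧), hg⟩
  refine ⟨∑ ω, f (rep ω), ?_⟩
  rw [← Fintype.sum_bijective _ hbij _ _ fun _ => rfl, Fintype.sum_prod_type]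
  simp only [hf, map_sum]

namespace Finset

variable {G : Type*} [AddGroup G] [Fintype G] [DecidableEq G]

theorem eq_univ_of_forall_vadd_finset_eq {t : Finset G} (ht : t.Nonempty)
    (h : ∀ g : G, g +ᵥ t = t) : t = univ := by
  obtain ⟨x, hx⟩ := ht
  refine eq_univ_of_forall fun y => ?_
  rw [← h (y - x)]
  exact mem_vadd_finset.2 ⟨x, hx, sub_add_cancel y x⟩

variable (G) in
def nontrivialSubsets : SubAddAction G (Finset G) where
  carrier := {t | t.Nonempty ∧ t ≠ univ}
  vadd_mem' g _ ht := ⟨ht.1.vadd_finset, by simpa using ht.2⟩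

@[simp]
theorem mem_nontrivialSubsets {t : Finset G} :
    t ∈ nontrivialSubsets G ↔ t.Nonempty ∧ t ≠ univ :=
  Iff.rfl

instance : DecidablePred (· ∈ nontrivialSubsets G) := fun _ =>
  decidable_of_iff _ mem_nontrivialSubsets.symm

theorem eq_zero_of_vadd_nontrivialSubsets (hG : (Nat.card G).Prime) {g : G}
    {t : nontrivialSubsets G} (h : g +ᵥ t = t) : g = 0 := by
  have : Fact (Nat.card G).Prime := ⟨hG⟩
  have hg : g ∈ AddAction.stabilizer G (t : Finset G) := congrArg Subtype.val h
  rcases (AddAction.stabilizer G (t : Finset G)).eq_bot_or_eq_top_of_prime_card with hbot | htop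
  · simpa [hbot] using hg
  · refine absurd (eq_univ_of_forall_vadd_finset_eq t.2.1 fun g => ?_) t.2.2
    exact AddAction.mem_stabilizer_iff.1 (htop ▸ AddSubgroup.mem_top g)

theorem sum_eq_add_sum_nontrivialSubsets {M : Type*} [AddCommMonoid M] (F : Finset G → M) :
    ∑ t, F t = F ∅ + F univ + ∑ t : nontrivialSubsets G, F t := by
  have htriv (t : Finset G) : t ∈ ({∅, univ} : Finset (Finset G)) ↔ t ∉ nontrivialSubsets G := by
    simp [← not_nonempty_iff_eq_empty, or_iff_not_imp_left]
  rw [← Fintype.sum_subtype_add_sum_subtype (· ∈ nontrivialSubsets G), add_comm,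
    ← sum_subtype _ htriv, sum_pair (univ_nonempty.ne_empty.symm)]

end Finset

theorem pow_finVal_add {M : Type*} [Monoid M] {p : ℕ} [NeZero p] {x : M} (hx : x ^ p = 1)
    (i j : Fin p) : x ^ (↑(i + j) : ℕ) = x ^ (i : ℕ) * x ^ (j : ℕ) := by
  rw [Fin.val_add, ← pow_eq_pow_mod _ hx, pow_add]

theorem pow_finVal_one {M : Type*} [Monoid M] {p : ℕ} [NeZero p] {x : M} (hx : x ^ p = 1) :
    x ^ ((1 : Fin p) : ℕ) = x := by
  rw [Fin.val_one', ← pow_eq_pow_mod _ hx, pow_one]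

namespace RingEquiv

section CommSemiring

variable {A : Type*} [CommSemiring A] (σ : A ≃+* A) (p : ℕ)

/-- The norm `N`, indexed by `Fin p` rather than `range p` so that `ℤ/p` acts on the indices. -/
def orbitSum (a : A) : A := ∑ i : Fin p, (σ ^ (i : ℕ)) a

def orbitProd (a : A) : A := ∏ i : Fin p, (σ ^ (i : ℕ)) a

theorem orbitSum_eq_sum_range (a : A) : σ.orbitSum p a = ∑ i ∈ range p, σ^[i] a := by
  simp [orbitSum, sum_range, RingAut.coe_pow]

theorem orbitProd_eq_prod_range (a : A) : σ.orbitProd p a = ∏ i ∈ range p, σ^[i] a := by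
  simp [orbitProd, prod_range, RingAut.coe_pow]

variable {σ p}

theorem apply_pow_finVal [NeZero p] (hσ : σ ^ p = 1) (i : Fin p) (a : A) :
    σ ((σ ^ (i : ℕ)) a) = (σ ^ (↑(1 + i) : ℕ)) a := by
  rw [pow_finVal_add hσ, pow_finVal_one hσ, RingAut.mul_apply]

theorem apply_orbitSum (hσ : σ ^ p = 1) (a : A) : σ (σ.orbitSum p a) = σ.orbitSum p a := by
  obtain rfl | _ := eq_zero_or_neZero p
  · simp [orbitSum]
  rw [orbitSum, map_sum]
  exact Fintype.sum_equiv (Equiv.addLeft 1) _ _ (apply_pow_finVal hσ · a)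

theorem apply_orbitProd (hσ : σ ^ p = 1) (a : A) : σ (σ.orbitProd p a) = σ.orbitProd p a := by
  obtain rfl | _ := eq_zero_or_neZero p
  · simp [orbitProd]
  rw [orbitProd, map_prod]
  exact Fintype.prod_equiv (Equiv.addLeft 1) _ _ (apply_pow_finVal hσ · a)

theorem prod_vadd_finset_pow_apply [NeZero p] (hσ : σ ^ p = 1) (g : Fin p)
    (t : Finset (Fin p)) (x : A) :
    ∏ i ∈ g +ᵥ t, (σ ^ (i : ℕ)) x = (σ ^ (g : ℕ)) (∏ i ∈ t, (σ ^ (i : ℕ)) x) := by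
  rw [vadd_finset_def, prod_image (AddAction.injective g).injOn, map_prod]
  simp only [vadd_eq_add, pow_finVal_add hσ, RingAut.mul_apply]

theorem exists_orbitProd_add (hp : p.Prime) (hσ : σ ^ p = 1) (a b : A) :
    ∃ u, σ.orbitProd p (a + b) = σ.orbitProd p a + σ.orbitProd p b + σ.orbitSum p u := by
  have : NeZero p := ⟨hp.ne_zero⟩
  let F : Finset (Fin p) → A := fun t =>
    (∏ i ∈ t, (σ ^ (i : ℕ)) a) * ∏ i ∈ tᶜ, (σ ^ (i : ℕ)) b
  have hF (g : Fin p) (t : Finset (Fin p)) : F (g +ᵥ t) = (σ ^ (g : ℕ)) (F t) := by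
    have hcompl : (g +ᵥ t)ᶜ = g +ᵥ tᶜ := by
      rw [compl_eq_univ_sdiff, compl_eq_univ_sdiff, vadd_finset_sdiff, vadd_finset_univ]
    simp only [F, hcompl, prod_vadd_finset_pow_apply hσ, map_mul]
  obtain ⟨u, hu⟩ := AddAction.exists_sum_eq_sum_of_free
    (fun g : Fin p => ((σ ^ (g : ℕ) : A ≃+* A) : A →+ A))
    (fun t : nontrivialSubsets (Fin p) => F t) (fun g t => hF g t)
    (fun _ _ => eq_zero_of_vadd_nontrivialSubsets (by simpa using hp))
  refine ⟨u, ?_⟩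
  have hexpand : σ.orbitProd p (a + b) = ∑ t, F t := by
    simp only [orbitProd, map_add]
    exact Fintype.prod_add _ _
  rw [hexpand, sum_eq_add_sum_nontrivialSubsets, hu]
  simp [F, orbitProd, orbitSum, add_comm]

end CommSemiring

variable {A : Type*} [CommRing A] {σ : A ≃+* A} {p : ℕ}

theorem pow_apply_coe_fixedSubring (c : fixedSubring σ) (n : ℕ) : (σ ^ n) (c : A) = c := by
  rw [RingAut.coe_pow]
  exact Function.iterate_fixed c.2 n

def orbitSumₗ (hσ : σ ^ p = 1) : A →ₗ[fixedSubring σ] fixedSubring σ where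
  toFun a := ⟨σ.orbitSum p a, apply_orbitSum hσ a⟩
  map_add' a b := Subtype.ext <| by simp [orbitSum, sum_add_distrib]
  map_smul' c a := Subtype.ext <| by
    simp only [orbitSum, Subring.smul_def, smul_eq_mul, map_mul, pow_apply_coe_fixedSubring,
      RingHom.id_apply, Subring.coe_mul, mul_sum]

def orbitProdHom (hσ : σ ^ p = 1) : A →* fixedSubring σ where
  toFun a := ⟨σ.orbitProd p a, apply_orbitProd hσ a⟩
  map_one' := Subtype.ext <| by simp [orbitProd]
  map_mul' a b := Subtype.ext <| by simp [orbitProd, prod_mul_distrib]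

def orbitProdRingHom (hp : p.Prime) (hσ : σ ^ p = 1) :
    A →+* fixedSubring σ ⧸ LinearMap.range (orbitSumₗ hσ) :=
  RingHom.mk' ((Ideal.Quotient.mk _ : _ →+* _).toMonoidHom.comp (orbitProdHom hσ)) fun a b => by
    obtain ⟨u, hu⟩ := exists_orbitProd_add hp hσ a b
    simp only [MonoidHom.comp_apply, RingHom.toMonoidHom_eq_coe, MonoidHom.coe_coe, ← map_add,
      Ideal.Quotient.eq]
    exact ⟨u, Subtype.ext <| by simp [orbitSumₗ, orbitProdHom, hu]⟩

end RingEquiv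

/--
Let `p` be a prime, `A` a commutative ring and `σ` a ring automorphism of `A` with
`σ^p = id`.  Write `N a = ∑_{i<p} σ^i a` for the norm map.  Then (1) the image of the
norm map is an ideal of the fixed subring `A^σ`, and (2) the map
`a ↦ class of σ⁰(a)⋯σ^{p-1}(a)` in `A^σ / N(A)` is a ring homomorphism.
-/
theorem normImage_isIdeal_and_product_ringHom
    (p : ℕ) (hp : p.Prime)
    (A : Type*) [CommRing A]
    (σ : A ≃+* A) (hσ : ∀ a, (⇑σ)^[p] a = a) :
    ∃ I : Ideal (fixedSubring σ),
      -- (1) the elements of I are exactly the norms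
      (∀ x : fixedSubring σ,
          x ∈ I ↔ ∃ a : A, (x : A) = ∑ i ∈ Finset.range p, (⇑σ)^[i] a) ∧
      -- products of conjugates are fixed by σ
      (∀ a : A, (∏ i ∈ Finset.range p, (⇑σ)^[i] a) ∈ fixedSubring σ) ∧
      -- (2) a ↦ [∏_{i<p} σ^i(a)] is a ring homomorphism A → A^σ / N(A)
      ∃ φ : A →+* (fixedSubring σ) ⧸ I,
        ∀ (a : A) (h : (∏ i ∈ Finset.range p, (⇑σ)^[i] a) ∈ fixedSubring σ),
          φ a = Ideal.Quotient.mk I ⟨∏ i ∈ Finset.range p, (⇑σ)^[i] a, h⟩ := by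
  have hσp : σ ^ p = 1 := RingEquiv.ext fun a => by rw [RingAut.coe_pow]; exact hσ a
  refine ⟨LinearMap.range (RingEquiv.orbitSumₗ hσp), fun x => ?_, fun a => ?_,
    RingEquiv.orbitProdRingHom hp hσp, fun a _ => ?_⟩
  · simp [LinearMap.mem_range, Subtype.ext_iff, RingEquiv.orbitSumₗ,
      RingEquiv.orbitSum_eq_sum_range, eq_comm]
  · rw [← σ.orbitProd_eq_prod_range]
    exact RingEquiv.apply_orbitProd hσp a
  · exact congrArg _ (Subtype.ext (σ.orbitProd_eq_prod_range p a))
end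

section
/- Let p be a prime, k an algebraically closed field of characteristic p, A a commutative k-algebra, and σ a k-algebra automorphism of A with σ^p = id. Set Ā = A^σ/N(A), a k-algebra. Every σ-invariant k-algebra homomorphism χ : A → k (i.e. with χ∘σ = χ) vanishes on N(A), hence its restriction to A^σ induces a k-algebra homomorphism Ā → k; and the resulting map {k-algebra homomorphisms χ : A → k with χ∘σ = χ} → {k-algebra homomorphisms Ā → k} is a bijection. -/
/-- The fixed subalgebra `A^σ` of a `k`-algebra automorphism `σ` of `A`. -/
def fixedSubalgebra {k A : Type*} [CommSemiring k] [Semiring A] [Algebra k A]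
    (σ : A ≃ₐ[k] A) : Subalgebra k A where
  carrier := {a : A | σ a = a}
  mul_mem' := by
    intro a b ha hb
    show σ (a * b) = a * b
    rw [map_mul, ha, hb]
  add_mem' := by
    intro a b ha hb
    show σ (a + b) = a + b
    rw [map_add, ha, hb]
  algebraMap_mem' := fun r => σ.commutes r

/-!
An invariant character `χ` satisfies `χ (N a) = p • χ a = 0` and `χ (∏ σ^i a) = (χ a)^p`; since the
product is `σ`-fixed and Frobenius is injective on `k`, `χ` is determined by its restriction to
`A^σ`. Conversely, `A` is integral over `A^σ`, so a character `ψ` of `A^σ` extends to a character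
`χ` of `A`: by lying-over there is a maximal ideal `M` of `A` over `ker ψ`, and `A ⧸ M` is integral
over the algebraically closed `k`, hence equal to it. If `ψ` kills the norms, then
`∑ χ ∘ σ^i = ψ ∘ N = 0`.
Under `χ ↦ χ ∘ σ` the character `χ` has period `p`, so its minimal period is `1` or `p`; in the
latter case the `χ ∘ σ^i` are `p` distinct characters with vanishing sum, contradicting Dedekind's
independence of characters. Hence `χ` is invariant.
-/

open Finset Function

@[to_additive]
theorem Finset.prod_range_rotate {M : Type*} [CommMonoid M] (f : ℕ → M) {n : ℕ}
    (h : f n = f 0) : ∏ i ∈ range n, f (i + 1) = ∏ i ∈ range n, f i := by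
  cases n with
  | zero => simp
  | succ n => rw [prod_range_succ, prod_range_succ', h]

@[to_additive]
theorem map_prod_range_iterate_eq_self {F M : Type*} [CommMonoid M] [FunLike F M M]
    [MonoidHomClass F M M] (f : F) {n : ℕ} {a : M} (h : f^[n] a = a) :
    f (∏ i ∈ range n, f^[i] a) = ∏ i ∈ range n, f^[i] a := by
  simp_rw [map_prod, ← iterate_succ_apply' f]
  exact prod_range_rotate (fun i => f^[i] a) h

theorem Function.iterate_invariant_apply {α β : Type*} {f : α → α} {g : α → β}
    (h : ∀ a, g (f a) = g a) (n : ℕ) (a : α) : g (f^[n] a) = g a :=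
  congrFun (iterate_invariant (funext h) n) a

theorem MonoidHom.exists_sum_apply_ne_zero_of_injOn {ι M L : Type*} [MulOneClass M]
    [CommRing L] [IsDomain L] {s : Finset ι} (hs : s.Nonempty) {f : ι → M →* L}
    (hf : Set.InjOn f s) : ∃ m, ∑ i ∈ s, f i m ≠ 0 := by
  classical
  by_contra! h
  obtain ⟨i, hi⟩ := hs
  refine one_ne_zero (linearIndependent_iff'.1 (linearIndependent_monoidHom M L) (s.image f)
    (fun _ => 1) ?_ (f i) (mem_image_of_mem f hi))
  rw [sum_image hf]
  funext m
  simpa using h m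

theorem AlgHom.map_sum_range_iterate_eq_zero {k A : Type*} [CommSemiring k] [CommSemiring A]
    [Algebra k A] {p : ℕ} [CharP k p] {σ : A →ₐ[k] A} {χ : A →ₐ[k] k}
    (hχ : ∀ a, χ (σ a) = χ a) (a : A) :
    χ (∑ i ∈ range p, σ^[i] a) = 0 := by
  simp [map_sum, iterate_invariant_apply hχ]

theorem AlgHom.eq_of_invariant_of_eqOn_fixed {k A : Type*} [CommRing k] [IsReduced k]
    [CommSemiring A] [Algebra k A] {p : ℕ} [ExpChar k p]
    {σ : A →ₐ[k] A} (hσ : ∀ a, σ^[p] a = a) {χ₁ χ₂ : A →ₐ[k] k}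
    (h₁ : ∀ a, χ₁ (σ a) = χ₁ a) (h₂ : ∀ a, χ₂ (σ a) = χ₂ a)
    (h : ∀ a, σ a = a → χ₁ a = χ₂ a) : χ₁ = χ₂ := by
  ext a
  have map_prod_orbit {χ : A →ₐ[k] k} (hχ : ∀ a, χ (σ a) = χ a) :
      χ (∏ i ∈ range p, σ^[i] a) = χ a ^ p := by
    simp [map_prod, iterate_invariant_apply hχ]
  refine frobenius_inj k p ?_
  simpa [frobenius_def, map_prod_orbit h₁, map_prod_orbit h₂] using
    h _ (map_prod_range_iterate_eq_self σ (hσ a))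

theorem AlgHom.apply_eq_of_sum_range_iterate_eq_zero {k A : Type*} [CommRing k] [IsDomain k]
    [CommSemiring A] [Algebra k A] {p : ℕ} (hp : p.Prime) {σ : A →ₐ[k] A}
    (hσ : ∀ a, σ^[p] a = a) {χ : A →ₐ[k] k}
    (hsum : ∀ a, ∑ i ∈ range p, χ (σ^[i] a) = 0) (a : A) : χ (σ a) = χ a := by
  let T : (A →ₐ[k] k) → (A →ₐ[k] k) := fun χ => χ.comp σ
  have T_iterate_apply (n : ℕ) (χ : A →ₐ[k] k) (a : A) : (T^[n] χ) a = χ (σ^[n] a) := by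
    induction n generalizing χ with
    | zero => rfl
    | succ n ih => rw [iterate_succ_apply, ih, iterate_succ_apply']; rfl
  have hper : IsPeriodicPt T p χ := AlgHom.ext fun a => by rw [T_iterate_apply, hσ]
  rcases hp.eq_one_or_self_of_dvd _ hper.minimalPeriod_dvd with h1 | hmin
  · exact DFunLike.congr_fun (minimalPeriod_eq_one_iff_isFixedPt.1 h1) a
  · have hinj : Set.InjOn (fun n => (T^[n] χ : A →* k)) (range p) := by
      rw [Finset.coe_range, ← hmin]
      have hcoe : Injective fun χ : A →ₐ[k] k => (χ : A →* k) :=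
        fun _ _ h => AlgHom.ext fun a => DFunLike.congr_fun h a
      exact hcoe.comp_injOn iterate_injOn_Iio_minimalPeriod
    obtain ⟨m, hm⟩ := MonoidHom.exists_sum_apply_ne_zero_of_injOn
      (nonempty_range_iff.2 hp.ne_zero) hinj
    exact absurd (by simpa [T_iterate_apply] using hsum m) hm

theorem Subalgebra.exists_algHom_extension {k A : Type*} [Field k] [IsAlgClosed k] [CommRing A]
    [Algebra k A] (R : Subalgebra k A) [Algebra.IsIntegral R A] (ψ : R →ₐ[k] k) :
    ∃ χ : A →ₐ[k] k, ∀ x : R, χ x = ψ x := by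
  have := RingHom.ker_isMaximal_of_surjective ψ fun c => ⟨algebraMap k R c, ψ.commutes c⟩
  obtain ⟨M, hM, hMψ⟩ := Ideal.exists_ideal_over_maximal_of_isIntegral (S := A) (RingHom.ker ψ)
    (((RingHom.injective_iff_ker_eq_bot _).1 (FaithfulSMul.algebraMap_injective R A)).le.trans
      bot_le)
  have hcomp : (algebraMap k (A ⧸ M)).comp ψ.toRingHom =
      (Ideal.Quotient.mk M).comp (algebraMap R A) := by
    ext x
    have h : x - algebraMap k R (ψ x) ∈ RingHom.ker ψ := by simp
    rw [← hMψ, Ideal.mem_comap, map_sub, ← Ideal.Quotient.mk_eq_mk_iff_sub_mem] at h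
    rw [RingHom.comp_apply, RingHom.comp_apply, h, ← IsScalarTower.algebraMap_apply,
      ← Ideal.Quotient.algebraMap_eq, ← IsScalarTower.algebraMap_apply]
    rfl
  have : Algebra.IsIntegral k (A ⧸ M) :=
    ⟨Ideal.Quotient.mk_surjective.forall.2 fun a =>
      (Algebra.IsIntegral.isIntegral a).map_of_comp_eq _ _ hcomp⟩
  let e := AlgEquiv.ofBijective (Algebra.ofId k (A ⧸ M))
    IsAlgClosed.algebraMap_bijective_of_isIntegral
  exact ⟨e.symm.toAlgHom.comp (Ideal.Quotient.mkₐ k M),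
    fun x => e.symm_apply_eq.2 (RingHom.congr_fun hcomp x).symm⟩

theorem isIntegral_fixedSubalgebra {k A : Type*} [CommRing k] [CommRing A] [Algebra k A]
    {σ : A ≃ₐ[k] A} (hσ : IsOfFinOrder σ) :
    Algebra.IsIntegral (fixedSubalgebra σ) A := by
  have : Finite (Subgroup.zpowers σ) := (finite_zpowers.2 hσ).to_subtype
  have : Algebra.IsInvariant (fixedSubalgebra σ) A (Subgroup.zpowers σ) :=
    ⟨fun b hb => ⟨⟨b, hb ⟨σ, Subgroup.mem_zpowers σ⟩⟩, rfl⟩⟩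
  exact Algebra.IsInvariant.isIntegral _ _ (Subgroup.zpowers σ)

/--
Let `p` be a prime, `k` an algebraically closed field of characteristic `p`, `A` a
commutative `k`-algebra and `σ` a `k`-algebra automorphism of `A` with `σ^p = id`.
Every `σ`-invariant character `χ : A → k` vanishes on the image of the norm map
`N a = ∑_{i<p} σ^i a`, hence induces a character of `Ā = A^σ/N(A)`; and the resulting map
from `σ`-invariant characters of `A` to characters of `Ā` is a bijection.  (Characters of
`Ā` are identified with characters of `A^σ` vanishing on the norms.)
-/
theorem invariant_characters_bijection
    (p : ℕ) (hp : p.Prime)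
    (k : Type*) [Field k] [IsAlgClosed k] [CharP k p]
    (A : Type*) [CommRing A] [Algebra k A]
    (σ : A ≃ₐ[k] A) (hσ : ∀ a, (⇑σ)^[p] a = a) :
    -- invariant characters kill the image of the norm map
    ((∀ χ : A →ₐ[k] k, (∀ a, χ (σ a) = χ a) →
        ∀ a : A, χ (∑ i ∈ Finset.range p, (⇑σ)^[i] a) = 0)
    -- injectivity: an invariant character is determined by its restriction to A^σ
    ∧ (∀ χ₁ χ₂ : A →ₐ[k] k, (∀ a, χ₁ (σ a) = χ₁ a) → (∀ a, χ₂ (σ a) = χ₂ a) →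
        (∀ a : A, σ a = a → χ₁ a = χ₂ a) → χ₁ = χ₂)
    -- surjectivity: every character of A^σ vanishing on the norms extends to an
    -- invariant character of A
    ∧ (∀ ψ : ↥(fixedSubalgebra σ) →ₐ[k] k,
        (∀ x : fixedSubalgebra σ,
          (∃ a : A, (x : A) = ∑ i ∈ Finset.range p, (⇑σ)^[i] a) → ψ x = 0) →
        ∃ χ : A →ₐ[k] k, (∀ a, χ (σ a) = χ a) ∧
          ∀ x : fixedSubalgebra σ, χ x = ψ x)) := by
  have : Fact p.Prime := ⟨hp⟩
  refine ⟨fun χ hχ => AlgHom.map_sum_range_iterate_eq_zero (σ := σ.toAlgHom) hχ,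
    fun χ₁ χ₂ => AlgHom.eq_of_invariant_of_eqOn_fixed (σ := σ.toAlgHom) hσ, fun ψ hψ => ?_⟩
  have : Algebra.IsIntegral (fixedSubalgebra σ) A := isIntegral_fixedSubalgebra <|
    isOfFinOrder_iff_pow_eq_one.2 ⟨p, hp.pos, AlgEquiv.ext fun a => by simpa using hσ a⟩
  obtain ⟨χ, hχ⟩ := (fixedSubalgebra σ).exists_algHom_extension ψ
  refine ⟨χ, AlgHom.apply_eq_of_sum_range_iterate_eq_zero hp (σ := σ.toAlgHom) hσ fun a => ?_,
    hχ⟩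
  rw [← map_sum]
  exact (hχ ⟨_, map_sum_range_iterate_eq_self σ (hσ a)⟩).trans (hψ _ ⟨a, rfl⟩)
end

section
/- Let p be a prime, A a commutative ring, σ a ring automorphism of A with σ^p = id, and K a field. If χ̃ : A → K is a (unital) ring homomorphism satisfying χ̃(N(a)) = 0 for every a ∈ A, then χ̃ ∘ σ = χ̃. -/
/-!
Precomposition with `σ` acts on the characters `A → K` with `χ` a periodic point of period `p`.
As `p` is prime, either `χ` is fixed or its orbit consists of `p` distinct characters
`χ ∘ σ^i`, whose sum `χ ∘ N` cannot vanish by Dedekind's independence of characters.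
-/

open Function Finset

theorem MonoidHom.iterate_comp_right_apply {G M : Type*} [MulOneClass G] [MulOneClass M]
    (τ : G →* G) (ψ : G →* M) (n : ℕ) (g : G) :
    ((fun φ : G →* M => φ.comp τ)^[n] ψ) g = ψ (τ^[n] g) := by
  induction n generalizing g with
  | zero => rfl
  | succ n ih => rw [iterate_succ_apply', comp_apply, ih, ← iterate_succ_apply]

theorem MonoidHom.exists_sum_apply_ne_zero {G L ι : Type*} [MulOneClass G] [CommRing L]
    [IsDomain L] {ψ : ι → G →* L} {s : Finset ι} (hs : s.Nonempty) (hψ : Set.InjOn ψ s) :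
    ∃ g, ∑ i ∈ s, ψ i g ≠ 0 := by
  classical
  by_contra! h
  have hsum : ∑ φ ∈ s.image ψ, (1 : L) • (φ : G → L) = 0 := by
    rw [sum_image hψ]
    funext g
    simpa using h g
  obtain ⟨i, hi⟩ := hs
  exact one_ne_zero <| linearIndependent_iff'.mp (linearIndependent_monoidHom G L) _ _ hsum _
    (mem_image_of_mem ψ hi)

/--
Let `p` be a prime, `A` a commutative ring, `σ` a ring automorphism of `A` with
`σ^p = id`, and `K` a field.  If a ring homomorphism `χ : A → K` kills all the norms
`N a = ∑_{i<p} σ^i a`, then `χ ∘ σ = χ`.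
-/
theorem char_vanishing_on_norms_is_invariant
    (p : ℕ) (hp : p.Prime)
    (A : Type*) [CommRing A]
    (σ : A ≃+* A) (hσ : ∀ a, (⇑σ)^[p] a = a)
    (K : Type*) [Field K] (χ : A →+* K)
    (hχ : ∀ a : A, χ (∑ i ∈ Finset.range p, (⇑σ)^[i] a) = 0) :
    ∀ a : A, χ (σ a) = χ a := by
  have := Fact.mk hp
  set f : (A →* K) → (A →* K) := fun φ => φ.comp (σ : A →+* A).toMonoidHom
  have hf : ∀ i a, (f^[i] χ) a = χ ((⇑σ)^[i] a) := fun i a =>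
    MonoidHom.iterate_comp_right_apply _ _ i a
  have hper : IsPeriodicPt f p χ := MonoidHom.ext fun a => by rw [hf, hσ]; rfl
  by_cases hfix : IsFixedPt f χ
  · exact DFunLike.congr_fun hfix
  have hinj : Set.InjOn (f^[·] χ) (range p) := by
    simpa [minimalPeriod_eq_prime hper hfix] using
      iterate_injOn_Iio_minimalPeriod (f := f) (x := χ)
  obtain ⟨a, ha⟩ := MonoidHom.exists_sum_apply_ne_zero (nonempty_range_iff.mpr hp.ne_zero) hinj
  exact (ha (by simpa [hf] using hχ a)).elim
end

section
/- Let p be a prime, k a field of characteristic p, S a set, and σ : S → S a map with σ^p = id. Let k[S] be the free k-module on S with the induced k-linear action of σ, and let N = 1 + σ + … + σ^{p−1} acting on k[S]. Then the k-linear map k[S^σ] → ker(1−σ)/im(N) sending a fixed basis element s ∈ S^σ to the class of s is an isomorphism, and likewise the k-linear map k[S^σ] → ker(N)/im(1−σ) sending s ∈ S^σ to the class of s is an isomorphism. -/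
/-!
Choose `ρ : S → S` constant on `σ`-orbits with `ρ x` in the orbit of `x`. Since `p` is prime, a
non-trivial orbit has exactly `p` points, so for `w` supported on representatives `N w` takes the
value `w (ρ x)` at a non-fixed point `x`, while at a fixed point `N` is multiplication by `p = 0`.
Hence a `σ`-invariant `u` is its restriction to the fixed points plus `N` of its restriction to the
representatives. If `N u = 0`, moving every basis vector `x` to `ρ x = σ^[m] x` changes `u` by a
telescoping element of `im (1 - σ)`; the moved vector is still killed by `N`, so it vanishes off
the fixed points.
-/

open Finsupp Finset Function

noncomputable def orbitNorm {S M : Type*} [AddCommMonoid M] (p : ℕ) (σ : S → S) (w : S →₀ M) :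
    S →₀ M :=
  ∑ i ∈ range p, mapDomain σ^[i] w

section

variable {S M : Type*} {σ : S → S} {p : ℕ}

lemma injective_of_iterate_eq_self (hp : 0 < p) (hσ : ∀ s, σ^[p] s = s) : Injective σ :=
  LeftInverse.injective (g := σ^[p - 1]) fun s => by
    rw [← iterate_succ_apply, Nat.succ_eq_add_one, Nat.sub_add_cancel hp, hσ]

lemma sum_range_succ_eq_of_eq [AddCommMonoid M] (g : ℕ → M) (h : g p = g 0) :
    ∑ i ∈ range p, g (i + 1) = ∑ i ∈ range p, g i := by
  cases p with
  | zero => rfl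
  | succ q => rw [sum_range_succ, sum_range_succ' g, h]

lemma orbitNorm_sub [AddCommGroup M] (u w : S →₀ M) :
    orbitNorm p σ (u - w) = orbitNorm p σ u - orbitNorm p σ w := by
  simp only [orbitNorm, mapDomain_sub, sum_sub_distrib]

lemma orbitNorm_mapDomain_self [AddCommMonoid M] (hσ : ∀ s, σ^[p] s = s) (w : S →₀ M) :
    orbitNorm p σ (mapDomain σ w) = orbitNorm p σ w := by
  simp only [orbitNorm, ← mapDomain_comp, ← iterate_succ]
  exact sum_range_succ_eq_of_eq (fun i => mapDomain σ^[i] w)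
    (by rw [show σ^[p] = id from funext hσ, iterate_zero])

lemma orbitNorm_sub_mapDomain_self [AddCommGroup M] (hσ : ∀ s, σ^[p] s = s) (w : S →₀ M) :
    orbitNorm p σ (w - mapDomain σ w) = 0 := by
  rw [orbitNorm_sub, orbitNorm_mapDomain_self hσ, sub_self]

lemma orbitNorm_apply [AddCommMonoid M] (hp : 0 < p) (hσ : ∀ s, σ^[p] s = s) (w : S →₀ M)
    (x : S) : orbitNorm p σ w x = ∑ i ∈ range p, w (σ^[i] x) := by
  have hinj := injective_of_iterate_eq_self hp hσ
  calc orbitNorm p σ w x = ∑ i ∈ range p, w (σ^[p - 1 - i + 1] x) := by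
        rw [orbitNorm, finsetSum_apply]
        refine sum_congr rfl fun i hi => ?_
        have hx : x = σ^[i] (σ^[p - 1 - i + 1] x) := by
          rw [← iterate_add_apply, show i + (p - 1 - i + 1) = p by grind, hσ]
        conv_lhs => rw [hx]
        exact mapDomain_apply (hinj.iterate i) w _
    _ = ∑ i ∈ range p, w (σ^[i + 1] x) := sum_range_reflect (fun i => w (σ^[i + 1] x)) p
    _ = ∑ i ∈ range p, w (σ^[i] x) :=
        sum_range_succ_eq_of_eq (fun i => w (σ^[i] x)) (by rw [hσ, iterate_zero_apply])

lemma orbitNorm_apply_eq_zero_of_isFixedPt {k : Type*} [Semiring k] [CharP k p] (hp : 0 < p)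
    (hσ : ∀ s, σ^[p] s = s) (w : S →₀ k) {x : S} (hx : σ x = x) : orbitNorm p σ w x = 0 := by
  simp [orbitNorm_apply hp hσ, iterate_fixed hx]

lemma exists_orbit_rep (hp : 0 < p) (hσ : ∀ s, σ^[p] s = s) :
    ∃ ρ : S → S, (∀ x, ρ (σ x) = ρ x) ∧ ∀ x, ∃ m, σ^[m] x = ρ x := by
  let orbitSetoid : Setoid S :=
    { r := fun x y => ∃ i j, σ^[i] x = σ^[j] y
      iseqv := ⟨fun _ => ⟨0, 0, rfl⟩, fun ⟨i, j, h⟩ => ⟨j, i, h.symm⟩,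
        fun ⟨i, j, h⟩ ⟨k, l, h'⟩ => ⟨k + i, j + l, by
          rw [iterate_add_apply, h, ← iterate_add_apply, Nat.add_comm, iterate_add_apply, h',
            ← iterate_add_apply]⟩⟩ }
  refine ⟨fun x => (Quotient.mk orbitSetoid x).out,
    fun x => congrArg Quotient.out (Quotient.sound ⟨0, 1, rfl⟩), fun x => ?_⟩
  obtain ⟨i, j, h⟩ := Quotient.mk_out (s := orbitSetoid) x
  obtain ⟨q, rfl⟩ : ∃ q, p = q + 1 := ⟨p - 1, by omega⟩
  -- `σ^[q * i + j] x = σ^[(q + 1) * i] (ρ x)`, and `σ^[q + 1]` is the identity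
  refine ⟨q * i + j, ?_⟩
  rw [iterate_add_apply, ← h, ← iterate_add_apply, ← Nat.succ_mul, iterate_mul,
    iterate_fixed (hσ _)]

lemma apply_iterate_of_apply_eq {β : Type*} {g : S → β} (h : ∀ x, g (σ x) = g x) (m : ℕ)
    (x : S) : g (σ^[m] x) = g x :=
  congrFun (iterate_invariant (funext h) m) x

lemma apply_apply_eq_of_exists_iterate {ρ : S → S} (hρσ : ∀ x, ρ (σ x) = ρ x)
    (hρ : ∀ x, ∃ m, σ^[m] x = ρ x) (x : S) : ρ (ρ x) = ρ x := by
  obtain ⟨m, hm⟩ := hρ x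
  rw [← hm, apply_iterate_of_apply_eq hρσ, hm]

lemma orbitNorm_apply_eq_apply_rep [AddCommMonoid M] (hp : p.Prime) (hσ : ∀ s, σ^[p] s = s)
    {ρ : S → S} (hρσ : ∀ x, ρ (σ x) = ρ x) (hρ : ∀ x, ∃ m, σ^[m] x = ρ x)
    {w : S →₀ M} (hw : ∀ y ∈ w.support, ρ y = y) {x : S} (hx : σ x ≠ x) :
    orbitNorm p σ w x = w (ρ x) := by
  have := Fact.mk hp
  obtain ⟨m, hm⟩ := hρ x
  have hmod : σ^[m % p] x = ρ x := (IsPeriodicPt.iterate_mod_apply (hσ x) m).trans hm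
  have hinj : Set.InjOn (σ^[·] x) (Set.Iio p) := by
    simpa [minimalPeriod_eq_prime (hσ x) hx] using iterate_injOn_Iio_minimalPeriod (f := σ) (x := x)
  have hmp : m % p < p := Nat.mod_lt _ hp.pos
  rw [orbitNorm_apply hp.pos hσ, sum_eq_single_of_mem (m % p) (mem_range.2 hmp), hmod]
  intro i hi hne
  by_contra h
  have hrep : ρ x = σ^[i] x := by
    rw [← apply_iterate_of_apply_eq hρσ i, hw _ (mem_support_iff.2 h)]
  exact hne (hinj (mem_range.1 hi) hmp (hrep.symm.trans hmod.symm))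

lemma single_sub_single_iterate [AddCommGroup M] (x : S) (a : M) (m : ℕ) :
    single x a - single (σ^[m] x) a =
      (∑ i ∈ range m, single (σ^[i] x) a) - mapDomain σ (∑ i ∈ range m, single (σ^[i] x) a) := by
  simp only [mapDomain_finsetSum, mapDomain_single, ← iterate_succ_apply']
  rw [← sum_sub_distrib, sum_range_sub' (fun i => single (σ^[i] x) a), iterate_zero_apply]

lemma exists_sub_mapDomain_eq_sub_mapDomain [AddCommGroup M] {ρ : S → S}
    (hρ : ∀ x, ∃ m, σ^[m] x = ρ x) (u : S →₀ M) :
    ∃ w, u - mapDomain ρ u = w - mapDomain σ w := by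
  induction u using Finsupp.induction_linear with
  | zero => exact ⟨0, by simp⟩
  | add u₁ u₂ h₁ h₂ =>
    obtain ⟨w₁, h₁⟩ := h₁
    obtain ⟨w₂, h₂⟩ := h₂
    exact ⟨w₁ + w₂, by
      rw [mapDomain_add, mapDomain_add, add_sub_add_comm, h₁, h₂, add_sub_add_comm]⟩
  | single x a =>
    obtain ⟨m, hm⟩ := hρ x
    exact ⟨_, by rw [mapDomain_single, ← hm, single_sub_single_iterate]⟩

lemma mapDomain_subtype_val_subtypeDomain [AddCommMonoid M] {P : S → Prop} {u : S →₀ M}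
    (hu : ∀ x ∈ u.support, P x) : mapDomain Subtype.val (u.subtypeDomain P) = u := by
  classical
  conv_rhs => rw [← extendDomain_subtypeDomain u hu]
  rw [extendDomain_eq_embDomain_subtype, embDomain_eq_mapDomain]
  rfl

lemma mapDomain_mapDomain_subtype_val [AddCommMonoid M] {P : S → Prop} {f : S → S}
    (hf : ∀ x : Subtype P, f x = x) (v : Subtype P →₀ M) :
    mapDomain f (mapDomain Subtype.val v) = mapDomain Subtype.val v := by
  rw [← mapDomain_comp]
  exact congrArg (mapDomain · v) (funext hf)

lemma mapDomain_apply_of_isFixedPt [AddCommMonoid M] {f : S → S} (hf : Injective f) (w : S →₀ M)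
    {x : S} (hx : f x = x) : mapDomain f w x = w x := by
  conv_lhs => rw [← hx]
  exact mapDomain_apply hf w x

lemma orbitNorm_mapDomain_subtype_val {k : Type*} [Semiring k] [CharP k p]
    (v : {s : S // σ s = s} →₀ k) : orbitNorm p σ (mapDomain Subtype.val v) = 0 := by
  ext x
  simp [orbitNorm, mapDomain_mapDomain_subtype_val fun x : {s // σ s = s} => iterate_fixed x.2 _]

lemma eq_zero_of_mapDomain_subtype_val_eq_orbitNorm {k : Type*} [Semiring k] [CharP k p]
    (hp : 0 < p) (hσ : ∀ s, σ^[p] s = s) {v : {s : S // σ s = s} →₀ k} {w : S →₀ k}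
    (h : mapDomain Subtype.val v = orbitNorm p σ w) : v = 0 := by
  ext x
  simpa [mapDomain_apply Subtype.val_injective, orbitNorm_apply_eq_zero_of_isFixedPt hp hσ w x.2]
    using congr($h x)

lemma eq_zero_of_mapDomain_subtype_val_eq_sub_mapDomain [AddCommGroup M] (hp : 0 < p)
    (hσ : ∀ s, σ^[p] s = s) {v : {s : S // σ s = s} →₀ M} {w : S →₀ M}
    (h : mapDomain Subtype.val v = w - mapDomain σ w) : v = 0 := by
  ext x
  simpa [mapDomain_apply Subtype.val_injective,
    mapDomain_apply_of_isFixedPt (injective_of_iterate_eq_self hp hσ) w x.2] using congr($h x)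

lemma exists_eq_mapDomain_subtype_val_add_orbitNorm [AddCommGroup M] (hp : p.Prime)
    (hσ : ∀ s, σ^[p] s = s) {u : S →₀ M} (hu : mapDomain σ u = u) :
    ∃ (v : {s : S // σ s = s} →₀ M) (w : S →₀ M),
      u = mapDomain Subtype.val v + orbitNorm p σ w := by
  classical
  obtain ⟨ρ, hρσ, hρ⟩ := exists_orbit_rep hp.pos hσ
  have hinv : ∀ x, u (σ x) = u x := fun x => by
    conv_lhs => rw [← hu]
    exact mapDomain_apply (injective_of_iterate_eq_self hp.pos hσ) u x
  set w := u.filter (fun y => ρ y = y)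
  have hw : ∀ y ∈ w.support, ρ y = y := fun y hy => by
    by_contra h
    exact mem_support_iff.1 hy (filter_apply_neg _ _ h)
  refine ⟨(u - orbitNorm p σ w).subtypeDomain (fun s => σ s = s), w, ?_⟩
  rw [mapDomain_subtype_val_subtypeDomain, sub_add_cancel]
  intro x hx
  by_contra hfix
  obtain ⟨m, hm⟩ := hρ x
  apply mem_support_iff.1 hx
  have hwρ : w (ρ x) = u (ρ x) := filter_apply_pos _ u (apply_apply_eq_of_exists_iterate hρσ hρ x)
  rw [Finsupp.sub_apply, orbitNorm_apply_eq_apply_rep hp hσ hρσ hρ hw hfix, hwρ, ← hm,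
    apply_iterate_of_apply_eq hinv, sub_self]

lemma exists_eq_mapDomain_subtype_val_add_sub_mapDomain [AddCommGroup M] (hp : p.Prime)
    (hσ : ∀ s, σ^[p] s = s) {u : S →₀ M} (hu : orbitNorm p σ u = 0) :
    ∃ (v : {s : S // σ s = s} →₀ M) (w : S →₀ M),
      u = mapDomain Subtype.val v + (w - mapDomain σ w) := by
  classical
  obtain ⟨ρ, hρσ, hρ⟩ := exists_orbit_rep hp.pos hσ
  obtain ⟨w, hw⟩ := exists_sub_mapDomain_eq_sub_mapDomain hρ u
  have hsupp : ∀ y ∈ (mapDomain ρ u).support, ρ y = y := fun y hy => by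
    obtain ⟨z, -, rfl⟩ := Finset.mem_image.1 (mapDomain_support hy)
    exact apply_apply_eq_of_exists_iterate hρσ hρ z
  have hN : orbitNorm p σ (mapDomain ρ u) = 0 := by
    rw [← sub_sub_cancel u (mapDomain ρ u), hw, orbitNorm_sub, hu,
      orbitNorm_sub_mapDomain_self hσ, sub_zero]
  refine ⟨(mapDomain ρ u).subtypeDomain (fun s => σ s = s), w, ?_⟩
  rw [mapDomain_subtype_val_subtypeDomain, ← hw, add_sub_cancel]
  intro x hx
  by_contra hfix
  apply mem_support_iff.1 hx
  rw [← hsupp x hx, ← orbitNorm_apply_eq_apply_rep hp hσ hρσ hρ hsupp hfix, hN, Finsupp.zero_apply]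

end

/--
Let `p` be a prime, `k` a field of characteristic `p`, `S` a set and `σ : S → S` with
`σ^p = id`.  Let `k[S] = S →₀ k` with the induced action `T = mapDomain σ` and norm
`N = ∑_{i<p} mapDomain σ^i`, and let `Φ : k[S^σ] → k[S]` be induced by the inclusion of
the fixed-point set.  Then `Φ` descends to `k`-linear isomorphisms
`k[S^σ] ≅ ker(1−T)/im N` and `k[S^σ] ≅ ker N/im(1−T)`, sending a fixed basis element `s`
to the class of `s`.  This is expressed below elementwise: `Φ` lands in the relevant
kernel, is injective modulo the relevant image, and is surjective modulo it.
-/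
theorem tate_free_module_on_set
    (p : ℕ) (hp : p.Prime)
    (k : Type*) [Field k] [CharP k p]
    (S : Type*) (σ : S → S) (hσ : ∀ s, σ^[p] s = s) :
    -- T⁰ : basis vectors of fixed points are in ker(1−σ)
    ((∀ v : {s : S // σ s = s} →₀ k,
        Finsupp.mapDomain σ (Finsupp.mapDomain Subtype.val v) =
          Finsupp.mapDomain (Subtype.val : {s : S // σ s = s} → S) v)
    -- T⁰ : injectivity modulo the image of N
    ∧ (∀ v : {s : S // σ s = s} →₀ k,
        (∃ w : S →₀ k, Finsupp.mapDomain (Subtype.val : {s : S // σ s = s} → S) v =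
            ∑ i ∈ Finset.range p, Finsupp.mapDomain (σ^[i]) w) → v = 0)
    -- T⁰ : surjectivity onto ker(1−σ) modulo the image of N
    ∧ (∀ u : S →₀ k, Finsupp.mapDomain σ u = u →
        ∃ (v : {s : S // σ s = s} →₀ k) (w : S →₀ k),
          u = Finsupp.mapDomain (Subtype.val : {s : S // σ s = s} → S) v +
            ∑ i ∈ Finset.range p, Finsupp.mapDomain (σ^[i]) w)
    -- T¹ : basis vectors of fixed points are in ker N
    ∧ (∀ v : {s : S // σ s = s} →₀ k,
        (∑ i ∈ Finset.range p,
          Finsupp.mapDomain (σ^[i])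
            (Finsupp.mapDomain (Subtype.val : {s : S // σ s = s} → S) v)) = 0)
    -- T¹ : injectivity modulo the image of 1−σ
    ∧ (∀ v : {s : S // σ s = s} →₀ k,
        (∃ w : S →₀ k, Finsupp.mapDomain (Subtype.val : {s : S // σ s = s} → S) v =
            w - Finsupp.mapDomain σ w) → v = 0)
    -- T¹ : surjectivity onto ker N modulo the image of 1−σ
    ∧ (∀ u : S →₀ k, (∑ i ∈ Finset.range p, Finsupp.mapDomain (σ^[i]) u) = 0 →
        ∃ (v : {s : S // σ s = s} →₀ k) (w : S →₀ k),
          u = Finsupp.mapDomain (Subtype.val : {s : S // σ s = s} → S) v +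
            (w - Finsupp.mapDomain σ w))) :=
  ⟨mapDomain_mapDomain_subtype_val fun x => x.2,
    fun _ ⟨_, hw⟩ => eq_zero_of_mapDomain_subtype_val_eq_orbitNorm hp.pos hσ hw,
    fun _ hu => exists_eq_mapDomain_subtype_val_add_orbitNorm hp hσ hu,
    orbitNorm_mapDomain_subtype_val,
    fun _ ⟨_, hw⟩ => eq_zero_of_mapDomain_subtype_val_eq_sub_mapDomain hp.pos hσ hw,
    fun _ hu => exists_eq_mapDomain_subtype_val_add_sub_mapDomain hp hσ hu⟩
end

section
/- Let p be a prime, k a field of characteristic p, G a group, σ an automorphism of G with σ^p = id, and K a subgroup of G with σ(K) = K. Assume: (i) every double coset KgK (g ∈ G) is the union of finitely many left cosets xK, and likewise every double coset K^σhK^σ (h ∈ G^σ) is the union of finitely many left cosets xK^σ; and (ii) K is σ-plain, meaning the map G^σ/K^σ → (G/K)^σ, gK^σ ↦ gK, is bijective. Let H(G,K) be the k-algebra of functions h : G → k that are bi-K-invariant (h(k₁gk₂) = h(g) for k₁,k₂ ∈ K) and supported on finitely many double cosets, with convolution (h₁ * h₂)(g) = Σ_{xK ∈ G/K} h₁(x)·h₂(x^{-1}g),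 and let σ act on H(G,K) by (σ·h)(g) = h(σ^{-1}(g)). Define H(G^σ,K^σ) analogously. Then for every h in the subalgebra H(G,K)^σ of σ-invariant elements, the restriction h|_{G^σ} lies in H(G^σ,K^σ), and the restriction map Br : H(G,K)^σ → H(G^σ,K^σ), h ↦ h|_{G^σ}, is a homomorphism of k-algebras. -/
/-!
For `x ∈ G^σ`, the automorphism `σ` permutes the cosets `c ∈ G/K` indexing the convolution sum
`(h₁ * h₂)(x)` and, when `h₁, h₂` are `σ`-invariant, fixes the summand. Since `σ` generates a
`p`-group, the non-fixed cosets fall into orbits of size divisible by `p`, whose contributions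
vanish in characteristic `p`. By `σ`-plainness the `σ`-fixed cosets are exactly the image of
the injection `G^σ/K^σ → G/K`, so what survives is the convolution in `H(G^σ,K^σ)`. The same
injection transports finiteness of supports; the remaining properties of restriction are
immediate.
-/

/-- A function `h : G → k` is bi-`K`-invariant if `h(k₁ g k₂) = h(g)` for `k₁, k₂ ∈ K`. -/
def IsBiInvariant {k G : Type*} [Group G] (K : Subgroup G) (h : G → k) : Prop :=
  ∀ k₁ k₂ g : G, k₁ ∈ K → k₂ ∈ K → h (k₁ * g * k₂) = h g

/-- A function `h : G → k` is supported on finitely many double cosets of `K`. -/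
def HasFiniteDcosetSupport {k G : Type*} [Zero k] [Group G] (K : Subgroup G)
    (h : G → k) : Prop :=
  Set.Finite ((fun g => {x : G | ∃ k₁ ∈ K, ∃ k₂ ∈ K, x = k₁ * g * k₂}) ''
    {g : G | h g ≠ 0})

/-- The convolution product on the Hecke algebra of `(G, K)`:
`(h₁ * h₂)(g) = ∑_{xK ∈ G/K} h₁(x)·h₂(x⁻¹ g)`. -/
noncomputable def heckeMul {k G : Type*} [Semiring k] [Group G] (K : Subgroup G)
    (h₁ h₂ : G → k) : G → k :=
  fun g => ∑ᶠ c : G ⧸ K, h₁ (Quotient.out c) * h₂ ((Quotient.out c)⁻¹ * g)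

/-- The fixed subgroup `G^σ` of an automorphism `σ` of a group `G`. -/
def fixedSubgroup {G : Type*} [Group G] (σ : G ≃* G) : Subgroup G where
  carrier := {g : G | σ g = g}
  one_mem' := map_one σ
  mul_mem' := by
    intro a b ha hb
    show σ (a * b) = a * b
    rw [map_mul, ha, hb]
  inv_mem' := by
    intro a ha
    show σ a⁻¹ = a⁻¹
    rw [map_inv, ha]

open Function DoubleCoset

section FixedPoints

variable {α k : Type*} {p n : ℕ} [Fact p.Prime]

theorem card_filter_fixed_modEq [DecidableEq α] (e : Equiv.Perm α) (he : e ^ p ^ n = 1)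
    (s : Finset α) (hs : ∀ a, e a ∈ s ↔ a ∈ s) :
    (s.filter (fun a => e a = a)).card ≡ s.card [MOD p] := by
  have h := Equiv.Perm.card_compl_support_modEq (p := p) (σ := e.subtypePerm hs) (n := n) (by
    ext x; simp [Equiv.Perm.subtypePerm_pow, he])
  rw [Fintype.card_coe, ← Finset.card_map (Embedding.subtype _)] at h
  convert h using 3
  ext a
  simp [and_comm]

variable [Ring k] [CharP k p]

/-- Sort the terms by value: each level set of `f` is `e`-stable, so its cardinality may be
replaced by that of its fixed points. -/
theorem sum_filter_fixed_eq_sum [DecidableEq α] (e : Equiv.Perm α) (he : e ^ p ^ n = 1)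
    (s : Finset α) (hs : ∀ a, e a ∈ s ↔ a ∈ s) (f : α → k) (hf : ∀ a, f (e a) = f a) :
    ∑ a ∈ s with e a = a, f a = ∑ a ∈ s, f a := by
  classical
  have fiberwise (t : Finset α) (ht : t ⊆ s) :
      ∑ a ∈ t, f a = ∑ b ∈ s.image f, ((t.filter (f · = b)).card : k) * b := by
    rw [← Finset.sum_fiberwise_of_maps_to (t := s.image f) (g := f)
      (fun a ha => Finset.mem_image_of_mem f (ht ha))]
    refine Finset.sum_congr rfl fun b _ => ?_
    rw [Finset.sum_congr rfl fun a ha => (Finset.mem_filter.mp ha).2, Finset.sum_const,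
      nsmul_eq_mul]
  rw [fiberwise _ (Finset.filter_subset _ s), fiberwise s subset_rfl]
  refine Finset.sum_congr rfl fun b _ => ?_
  rw [Finset.filter_comm, (CharP.natCast_eq_natCast k p).mpr
    (card_filter_fixed_modEq e he _ fun a => ?_)]
  simp only [Finset.mem_filter, hs, hf]

theorem finsum_mem_fixedPoints_eq_finsum (e : Equiv.Perm α) (he : e ^ p ^ n = 1) (f : α → k)
    (hf : ∀ a, f (e a) = f a) (hfin : (support f).Finite) :
    ∑ᶠ a ∈ fixedPoints e, f a = ∑ᶠ a, f a := by
  classical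
  rw [finsum_eq_sum f hfin, ← sum_filter_fixed_eq_sum e he _ (by simp [hf]) f hf]
  refine finsum_mem_eq_sum_of_inter_support_eq f ?_
  ext a
  simp [IsFixedPt, and_comm]

end FixedPoints

section Hecke

variable {G : Type*} [Group G]

def quotientSubgroupOfEmbedding (K H : Subgroup G) : H ⧸ K.subgroupOf H ↪ G ⧸ K where
  toFun := Quotient.map' Subtype.val fun _ _ => by
    simp_rw [QuotientGroup.leftRel_eq]
    exact id
  inj' := Quotient.ind₂' fun _ _ h => by
    simpa [QuotientGroup.eq, Subgroup.mem_subgroupOf] using h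

@[simp]
theorem quotientSubgroupOfEmbedding_mk (K H : Subgroup G) (x : H) :
    quotientSubgroupOfEmbedding K H (x : H ⧸ K.subgroupOf H) = ((x : G) : G ⧸ K) :=
  rfl

def quotientPerm (σ : G ≃* G) (K : Subgroup G) (hK : ∀ g, σ g ∈ K ↔ g ∈ K) :
    Equiv.Perm (G ⧸ K) :=
  Quotient.congr σ.toEquiv fun a b => by
    simp [QuotientGroup.leftRel_apply, ← map_inv, ← map_mul, hK]

section QuotientPerm

variable (σ : G ≃* G) (K : Subgroup G) (hK : ∀ g, σ g ∈ K ↔ g ∈ K)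

@[simp]
theorem quotientPerm_mk (g : G) : quotientPerm σ K hK (g : G ⧸ K) = (σ g : G ⧸ K) :=
  rfl

theorem quotientPerm_pow_mk (m : ℕ) (g : G) :
    (quotientPerm σ K hK ^ m) (g : G ⧸ K) = ((⇑σ)^[m] g : G ⧸ K) := by
  induction m with
  | zero => rfl
  | succ m ih => rw [pow_succ', Equiv.Perm.mul_apply, ih, iterate_succ_apply', quotientPerm_mk]

theorem quotientPerm_pow_eq_one {m : ℕ} (hσ : ∀ g, (⇑σ)^[m] g = g) :
    quotientPerm σ K hK ^ m = 1 :=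
  Equiv.ext fun c => QuotientGroup.induction_on c fun g => by
    rw [quotientPerm_pow_mk, hσ, Equiv.Perm.one_apply]

theorem fixedPoints_quotientPerm_eq_range
    (hplain : ∀ g : G, g⁻¹ * σ g ∈ K → ∃ g₀ : G, σ g₀ = g₀ ∧ g₀⁻¹ * g ∈ K) :
    fixedPoints (quotientPerm σ K hK) =
      Set.range (quotientSubgroupOfEmbedding K (fixedSubgroup σ)) := by
  ext c
  induction c using QuotientGroup.induction_on with
  | H g =>
    constructor
    · intro hg
      obtain ⟨g₀, hg₀, hg₀g⟩ := hplain g (QuotientGroup.eq.mp hg.symm)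
      exact ⟨((⟨g₀, hg₀⟩ : fixedSubgroup σ) : _ ⧸ _), QuotientGroup.eq.mpr hg₀g⟩
    · rintro ⟨q, hq⟩
      induction q using QuotientGroup.induction_on with
      | H y =>
        rw [← hq]
        exact congrArg (fun x : G => (x : G ⧸ K)) y.2

end QuotientPerm

section Support

variable {k : Type*} [Zero k] (K : Subgroup G)

theorem hasFiniteDcosetSupport_iff (h : G → k) :
    HasFiniteDcosetSupport K h ↔ ((doubleCoset · (K : Set G) K) '' support h).Finite := by
  have : (fun g => {x : G | ∃ k₁ ∈ K, ∃ k₂ ∈ K, x = k₁ * g * k₂}) =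
      (doubleCoset · (K : Set G) K) := by
    ext g x
    exact mem_doubleCoset.symm
  rw [HasFiniteDcosetSupport, this]
  rfl

theorem image_mk_doubleCoset (g : G) :
    ((↑) '' doubleCoset g (K : Set G) K : Set (G ⧸ K)) =
      {c | ∃ κ ∈ K, c = QuotientGroup.mk (κ * g)} := by
  ext c
  simp only [Set.mem_image, mem_doubleCoset, SetLike.mem_coe]
  constructor
  · rintro ⟨_, ⟨κ₁, hκ₁, κ₂, hκ₂, rfl⟩, rfl⟩
    exact ⟨κ₁, hκ₁, QuotientGroup.mk_mul_of_mem _ hκ₂⟩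
  · rintro ⟨κ, hκ, rfl⟩
    exact ⟨κ * g * 1, ⟨κ, hκ, 1, K.one_mem, rfl⟩, by rw [mul_one]⟩

theorem HasFiniteDcosetSupport.finite_image_mk
    (hfin : ∀ g : G, {c : G ⧸ K | ∃ κ ∈ K, c = QuotientGroup.mk (κ * g)}.Finite) {h : G → k}
    (hh : HasFiniteDcosetSupport K h) : (((↑) : G → G ⧸ K) '' support h).Finite := by
  rw [hasFiniteDcosetSupport_iff] at hh
  refine (hh.biUnion fun D hD => ?_).subset
    (Set.image_subset_iff.mpr fun g hg => Set.mem_biUnion (Set.mem_image_of_mem _ hg)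
      (Set.mem_image_of_mem _ (mem_doubleCoset_self K K g)))
  obtain ⟨g, -, rfl⟩ := hD
  rw [image_mk_doubleCoset]
  exact hfin g

theorem hasFiniteDcosetSupport_of_finite_image_mk {h : G → k}
    (hh : (((↑) : G → G ⧸ K) '' support h).Finite) : HasFiniteDcosetSupport K h := by
  rw [hasFiniteDcosetSupport_iff]
  refine (hh.image fun c => doubleCoset c.out (K : Set G) K).subset ?_
  rintro _ ⟨g, hg, rfl⟩
  refine ⟨g, ⟨g, hg, rfl⟩, doubleCoset_eq_of_mem ?_⟩
  obtain ⟨κ, hκ⟩ := QuotientGroup.mk_out_eq_mul K g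
  exact mem_doubleCoset.mpr ⟨1, K.one_mem, κ, κ.2, by rw [one_mul, hκ]⟩

variable {K}

theorem HasFiniteDcosetSupport.subgroupOf
    (hfin : ∀ g : G, {c : G ⧸ K | ∃ κ ∈ K, c = QuotientGroup.mk (κ * g)}.Finite) {h : G → k}
    (hh : HasFiniteDcosetSupport K h) (H : Subgroup G) :
    HasFiniteDcosetSupport (K.subgroupOf H) (fun x : H => h x) := by
  refine hasFiniteDcosetSupport_of_finite_image_mk _ <|
    Set.Finite.of_finite_image ((hh.finite_image_mk K hfin).subset ?_)
      (quotientSubgroupOfEmbedding K H).injective.injOn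
  rintro _ ⟨_, ⟨x, hx, rfl⟩, rfl⟩
  exact ⟨x, hx, rfl⟩

end Support

theorem IsBiInvariant.subgroupOf {k : Type*} {K : Subgroup G} {h : G → k}
    (hh : IsBiInvariant K h) (H : Subgroup G) : IsBiInvariant (K.subgroupOf H) (fun x : H => h x) :=
  fun _ _ _ hk₁ hk₂ => hh _ _ _ hk₁ hk₂

theorem indicator_subgroupOf {k : Type*} [Zero k] (K H : Subgroup G) (f : G → k) (x : H) :
    Set.indicator (K : Set G) f x = Set.indicator (K.subgroupOf H : Set H) (fun y => f y) x := by
  by_cases hx : (x : G) ∈ K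
  · rw [Set.indicator_of_mem hx, Set.indicator_of_mem (Subgroup.mem_subgroupOf.mpr hx)]
  · rw [Set.indicator_of_notMem hx, Set.indicator_of_notMem (mt Subgroup.mem_subgroupOf.mp hx)]

section Convolution

variable {k : Type*} [Semiring k] {K : Subgroup G}

noncomputable def heckeTerm (K : Subgroup G) (h₁ h₂ : G → k) (g : G) (c : G ⧸ K) : k :=
  h₁ c.out * h₂ (c.out⁻¹ * g)

theorem heckeTerm_mk {h₁ h₂ : G → k} (hh₁ : IsBiInvariant K h₁) (hh₂ : IsBiInvariant K h₂)
    (g y : G) : heckeTerm K h₁ h₂ g (y : G ⧸ K) = h₁ y * h₂ (y⁻¹ * g) := by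
  obtain ⟨κ, hκ⟩ := QuotientGroup.mk_out_eq_mul K y
  rw [heckeTerm, hκ]
  congr 1
  · simpa using hh₁ 1 κ y K.one_mem κ.2
  · simpa [mul_assoc] using hh₂ κ⁻¹ 1 (y⁻¹ * g) (K.inv_mem κ.2) K.one_mem

end Convolution

theorem heckeMul_fixedSubgroup_apply {k : Type*} [Ring k] {K : Subgroup G} {p n : ℕ}
    [Fact p.Prime] [CharP k p] {σ : G ≃* G} (hσ : ∀ g, (⇑σ)^[p ^ n] g = g)
    (hK : ∀ g, σ g ∈ K ↔ g ∈ K)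
    (hfin : ∀ g : G, {c : G ⧸ K | ∃ κ ∈ K, c = QuotientGroup.mk (κ * g)}.Finite)
    (hplain : ∀ g : G, g⁻¹ * σ g ∈ K → ∃ g₀ : G, σ g₀ = g₀ ∧ g₀⁻¹ * g ∈ K)
    {h₁ h₂ : G → k} (hh₁ : IsBiInvariant K h₁) (hs₁ : HasFiniteDcosetSupport K h₁)
    (hσ₁ : ∀ g, h₁ (σ g) = h₁ g) (hh₂ : IsBiInvariant K h₂) (hσ₂ : ∀ g, h₂ (σ g) = h₂ g)
    (x : fixedSubgroup σ) :
    heckeMul K h₁ h₂ x =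
      heckeMul (K.subgroupOf (fixedSubgroup σ)) (fun y => h₁ y) (fun y => h₂ y) x := by
  have hT : ∀ c, heckeTerm K h₁ h₂ x (quotientPerm σ K hK c) = heckeTerm K h₁ h₂ x c := fun c =>
    QuotientGroup.induction_on c fun y => by
      have hσx : (σ y)⁻¹ * x = σ (y⁻¹ * x) := by rw [map_mul, map_inv, x.2]
      rw [quotientPerm_mk, heckeTerm_mk hh₁ hh₂, heckeTerm_mk hh₁ hh₂, hσ₁, hσx, hσ₂]
  have hT_fin : (support (heckeTerm K h₁ h₂ x)).Finite :=
    (hs₁.finite_image_mk K hfin).subset fun c hc => ⟨c.out, left_ne_zero_of_mul hc, c.out_eq'⟩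
  calc heckeMul K h₁ h₂ x = ∑ᶠ c, heckeTerm K h₁ h₂ x c := rfl
    _ = ∑ᶠ c ∈ fixedPoints (quotientPerm σ K hK), heckeTerm K h₁ h₂ x c :=
      (finsum_mem_fixedPoints_eq_finsum _ (quotientPerm_pow_eq_one σ K hK hσ) _ hT hT_fin).symm
    _ = ∑ᶠ q, heckeTerm K h₁ h₂ x (quotientSubgroupOfEmbedding K (fixedSubgroup σ) q) := by
      rw [fixedPoints_quotientPerm_eq_range σ K hK hplain,
        finsum_mem_range (Embedding.injective _)]
    _ = _ := finsum_congr fun q => by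
      conv_lhs => rw [← q.out_eq', quotientSubgroupOfEmbedding_mk, heckeTerm_mk hh₁ hh₂]
      rfl

end Hecke

theorem brauer_homomorphism_is_algebra_hom_general
    (p : ℕ) (hp : p.Prime)
    (k : Type*) [Field k] [CharP k p]
    (G : Type*) [Group G]
    (σ : G ≃* G) (hσ : ∀ g, (⇑σ)^[p] g = g)
    (K : Subgroup G) (hK : ∀ g : G, σ g ∈ K ↔ g ∈ K)
    -- (i) every double coset of K is a finite union of left cosets, in G and in G^σ
    (hfinG : ∀ g : G,
      {c : G ⧸ K | ∃ κ ∈ K, c = QuotientGroup.mk (κ * g)}.Finite)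
    -- (ii) K is σ-plain
    (hplain : ∀ g : G, g⁻¹ * σ g ∈ K →
      ∃ g₀ : G, σ g₀ = g₀ ∧ g₀⁻¹ * g ∈ K) :
    -- restriction of a σ-invariant Hecke element is a Hecke element for (G^σ, K^σ)
    ((∀ h : G → k, IsBiInvariant K h → HasFiniteDcosetSupport K h →
        (∀ g, h (σ g) = h g) →
        IsBiInvariant (K.subgroupOf (fixedSubgroup σ))
          (fun x : ↥(fixedSubgroup σ) => h ↑x) ∧
        HasFiniteDcosetSupport (K.subgroupOf (fixedSubgroup σ))
          (fun x : ↥(fixedSubgroup σ) => h ↑x))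
    -- restriction is additive
    ∧ (∀ h₁ h₂ : G → k,
        (fun x : ↥(fixedSubgroup σ) => (h₁ + h₂) ↑x) =
          (fun x : ↥(fixedSubgroup σ) => h₁ ↑x) +
            fun x : ↥(fixedSubgroup σ) => h₂ ↑x)
    -- restriction is k-linear
    ∧ (∀ (c : k) (h : G → k),
        (fun x : ↥(fixedSubgroup σ) => (c • h) ↑x) =
          c • fun x : ↥(fixedSubgroup σ) => h ↑x)
    -- restriction sends the unit (the indicator function of K) to the unit
    ∧ (∀ x : ↥(fixedSubgroup σ),
        Set.indicator (K : Set G) (fun _ => (1 : k)) ↑x =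
          Set.indicator (K.subgroupOf (fixedSubgroup σ) : Set ↥(fixedSubgroup σ))
            (fun _ => (1 : k)) x)
    -- restriction is multiplicative for convolution
    ∧ (∀ h₁ h₂ : G → k,
        IsBiInvariant K h₁ → HasFiniteDcosetSupport K h₁ → (∀ g, h₁ (σ g) = h₁ g) →
        IsBiInvariant K h₂ → HasFiniteDcosetSupport K h₂ → (∀ g, h₂ (σ g) = h₂ g) →
        ∀ x : ↥(fixedSubgroup σ),
          heckeMul K h₁ h₂ (↑x) =
            heckeMul (K.subgroupOf (fixedSubgroup σ))
              (fun y : ↥(fixedSubgroup σ) => h₁ ↑y)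
              (fun y : ↥(fixedSubgroup σ) => h₂ ↑y) x)) := by
  have := Fact.mk hp
  refine ⟨fun h hh hs _ => ⟨hh.subgroupOf _, hs.subgroupOf hfinG _⟩, fun _ _ => rfl,
    fun _ _ => rfl, indicator_subgroupOf K _ _, ?_⟩
  intro h₁ h₂ hh₁ hs₁ hσ₁ hh₂ _ hσ₂
  exact heckeMul_fixedSubgroup_apply (n := 1) (by simpa using hσ) hK hfinG hplain
    hh₁ hs₁ hσ₁ hh₂ hσ₂

/--
Let `p` be a prime, `k` a field of characteristic `p`, `G` a group with an automorphism
`σ` of order dividing `p`, and `K ≤ G` a `σ`-stable subgroup.  Assume (i) that every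
double coset of `K` in `G` (resp. of `K^σ` in `G^σ`) is a finite union of left cosets,
and (ii) that `K` is `σ`-plain, i.e. `G^σ/K^σ → (G/K)^σ` is bijective (injectivity is
automatic; surjectivity is the displayed hypothesis).  Then the restriction to `G^σ` of
every `σ`-invariant element of the Hecke algebra `H(G,K)` lies in the Hecke algebra
`H(G^σ,K^σ)`, and restriction `Br : H(G,K)^σ → H(G^σ,K^σ)` is a `k`-algebra homomorphism
(it is additive, `k`-linear, unital, and multiplicative for convolution).
-/
theorem brauer_homomorphism_is_algebra_hom
    (p : ℕ) (hp : p.Prime)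
    (k : Type*) [Field k] [CharP k p]
    (G : Type*) [Group G]
    (σ : G ≃* G) (hσ : ∀ g, (⇑σ)^[p] g = g)
    (K : Subgroup G) (hK : ∀ g : G, σ g ∈ K ↔ g ∈ K)
    -- (i) every double coset of K is a finite union of left cosets, in G and in G^σ
    (hfinG : ∀ g : G,
      {c : G ⧸ K | ∃ κ ∈ K, c = QuotientGroup.mk (κ * g)}.Finite)
    (hfinH : ∀ g : ↥(fixedSubgroup σ),
      {c : ↥(fixedSubgroup σ) ⧸ K.subgroupOf (fixedSubgroup σ) |
        ∃ κ ∈ K.subgroupOf (fixedSubgroup σ), c = QuotientGroup.mk (κ * g)}.Finite)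
    -- (ii) K is σ-plain
    (hplain : ∀ g : G, g⁻¹ * σ g ∈ K →
      ∃ g₀ : G, σ g₀ = g₀ ∧ g₀⁻¹ * g ∈ K) :
    -- restriction of a σ-invariant Hecke element is a Hecke element for (G^σ, K^σ)
    ((∀ h : G → k, IsBiInvariant K h → HasFiniteDcosetSupport K h →
        (∀ g, h (σ g) = h g) →
        IsBiInvariant (K.subgroupOf (fixedSubgroup σ))
          (fun x : ↥(fixedSubgroup σ) => h ↑x) ∧
        HasFiniteDcosetSupport (K.subgroupOf (fixedSubgroup σ))
          (fun x : ↥(fixedSubgroup σ) => h ↑x))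
    -- restriction is additive
    ∧ (∀ h₁ h₂ : G → k,
        (fun x : ↥(fixedSubgroup σ) => (h₁ + h₂) ↑x) =
          (fun x : ↥(fixedSubgroup σ) => h₁ ↑x) +
            fun x : ↥(fixedSubgroup σ) => h₂ ↑x)
    -- restriction is k-linear
    ∧ (∀ (c : k) (h : G → k),
        (fun x : ↥(fixedSubgroup σ) => (c • h) ↑x) =
          c • fun x : ↥(fixedSubgroup σ) => h ↑x)
    -- restriction sends the unit (the indicator function of K) to the unit
    ∧ (∀ x : ↥(fixedSubgroup σ),
        Set.indicator (K : Set G) (fun _ => (1 : k)) ↑x =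
          Set.indicator (K.subgroupOf (fixedSubgroup σ) : Set ↥(fixedSubgroup σ))
            (fun _ => (1 : k)) x)
    -- restriction is multiplicative for convolution
    ∧ (∀ h₁ h₂ : G → k,
        IsBiInvariant K h₁ → HasFiniteDcosetSupport K h₁ → (∀ g, h₁ (σ g) = h₁ g) →
        IsBiInvariant K h₂ → HasFiniteDcosetSupport K h₂ → (∀ g, h₂ (σ g) = h₂ g) →
        ∀ x : ↥(fixedSubgroup σ),
          heckeMul K h₁ h₂ (↑x) =
            heckeMul (K.subgroupOf (fixedSubgroup σ))
              (fun y : ↥(fixedSubgroup σ) => h₁ ↑y)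
              (fun y : ↥(fixedSubgroup σ) => h₂ ↑y) x)) :=
  brauer_homomorphism_is_algebra_hom_general p hp k G σ hσ K hK hfinG hplain
end

section
/- Let K be a profinite group acting continuously on a locally compact Hausdorff topological space X, such that the action is free and proper (the map K × X → X × X, (κ,x) ↦ (κ·x, x), is a proper map). Then the natural map from X to the inverse limit, over the open normal subgroups U of K (ordered by reverse inclusion), of the quotient spaces X/U with their quotient topologies, is a homeomorphism. -/
open Topology

/-!
Every neighbourhood of `1` in a profinite group contains an open normal subgroup `U`, so by
continuity of the action at `(1, x)` the `U`-saturation of a small neighbourhood of `x` lies in any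
given neighbourhood of `x`; as quotient maps by group actions are open, `X` carries the topology
pulled back from the quotients, and injectivity follows from `X` being Hausdorff.
A compatible family of orbits is a directed family of nonempty compact sets (each `U` is compact),
so by Cantor's intersection theorem it has a common point.
-/

namespace MulAction

variable {K X ι : Type*} [Group K] [MulAction K X]

def quotientsMk (S : ι → Subgroup K) (x : X) (i : ι) : Quotient (orbitRel (S i) X) :=
  Quotient.mk _ x

lemma orbitRel_mono {U V : Subgroup K} (hUV : U ≤ V) : orbitRel U X ≤ orbitRel V X := by
  rintro x y ⟨u, rfl⟩
  exact ⟨⟨u, hUV u.2⟩, rfl⟩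

lemma orbit_subgroup_eq_image (U : Subgroup K) (x : X) :
    orbit U x = (· • x) '' (U : Set K) := by
  ext y
  simp [mem_orbit_iff, Subgroup.smul_def]

lemma preimage_quotient_mk_singleton (U : Subgroup K) (x : X) :
    Quotient.mk (orbitRel U X) ⁻¹' {Quotient.mk _ x} = orbit U x := by
  ext y
  simp [Quotient.eq, orbitRel_apply]

lemma quotientsMk_apply_eq_of_le {S : ι → Subgroup K} {i j : ι} (hij : S i ≤ S j) {x y : X}
    (h : quotientsMk S x i = Quotient.mk _ y) : quotientsMk S x j = Quotient.mk _ y :=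
  Quotient.sound (orbitRel_mono hij (Quotient.exact h))

variable [TopologicalSpace K] [TopologicalSpace X] [ContinuousSMul K X]

lemma isCompact_orbit_subgroup {U : Subgroup K} (hU : IsCompact (U : Set K)) (x : X) :
    IsCompact (orbit U x) := by
  rw [orbit_subgroup_eq_image]
  exact hU.image (continuous_id.smul continuous_const)

lemma isInducing_quotientsMk {S : ι → Subgroup K}
    (hS : ∀ Ω ∈ 𝓝 (1 : K), ∃ i, (S i : Set K) ⊆ Ω) : IsInducing (quotientsMk (X := X) S) := by
  rw [isInducing_iff_nhds]
  refine fun x => le_antisymm ((continuous_pi fun i => continuous_quot_mk).tendsto x).le_comap ?_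
  intro W hW
  have hsmul : ∀ᶠ q : K × X in 𝓝 (1, x), q.1 • q.2 ∈ W :=
    (continuous_smul.tendsto (1, x)).eventually (by rwa [one_smul])
  obtain ⟨Ω, hΩ, N, hN, hΩN⟩ := mem_nhds_prod_iff.1 hsmul
  obtain ⟨i, hi⟩ := hS Ω hΩ
  have hopen : IsOpenMap (Quotient.mk (orbitRel (S i) X)) := isOpenMap_quotient_mk'_mul
  refine ⟨Function.eval i ⁻¹' (Quotient.mk _ '' N),
    (continuous_apply i).continuousAt.preimage_mem_nhds (hopen.image_mem_nhds hN), ?_⟩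
  rintro y ⟨z, hz, hzy⟩
  obtain ⟨u, rfl⟩ := Quotient.exact hzy.symm
  exact hΩN (Set.mk_mem_prod (hi u.2) hz)

lemma exists_quotientsMk_eq [T2Space X] [Nonempty ι] {S : ι → Subgroup K}
    (hdir : Directed (· ≥ ·) S) (hcompact : ∀ i, IsCompact (S i : Set K))
    (f : ∀ i, Quotient (orbitRel (S i) X))
    (hf : ∀ i j, S i ≤ S j → ∀ x, f i = Quotient.mk _ x → f j = Quotient.mk _ x) :
    ∃ x, quotientsMk S x = f := by
  set A : ι → Set X := fun i => Quotient.mk _ ⁻¹' {f i}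
  have hA : ∀ i, IsCompact (A i) := fun i => by
    obtain ⟨y, hy⟩ := Quotient.exists_rep (f i)
    simp only [A, ← hy, preimage_quotient_mk_singleton]
    exact isCompact_orbit_subgroup (hcompact i) y
  have hAdir : Directed (· ⊇ ·) A := fun i j => by
    obtain ⟨k, hki, hkj⟩ := hdir i j
    exact ⟨k, fun x hx => (hf k i hki x hx.symm).symm, fun x hx => (hf k j hkj x hx.symm).symm⟩
  obtain ⟨x, hx⟩ := IsCompact.nonempty_iInter_of_directed_nonempty_isCompact_isClosed A hAdir
    (fun i => Quotient.exists_rep (f i)) hA (fun i => (hA i).isClosed)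
  exact ⟨x, funext fun i => Set.mem_iInter.1 hx i⟩

end MulAction

section OpenNormalSubgroups

variable {K : Type*} [Group K] [TopologicalSpace K]

instance : Nonempty {U : Subgroup K // U.Normal ∧ IsOpen (U : Set K)} :=
  ⟨⟨⊤, inferInstance, isOpen_univ⟩⟩

lemma directed_openNormalSubgroups :
    Directed (· ≥ ·) (Subtype.val : {U : Subgroup K // U.Normal ∧ IsOpen (U : Set K)} → _) :=
  fun U V => ⟨⟨U.1 ⊓ V.1, @Subgroup.normal_inf_normal _ _ _ _ U.2.1 V.2.1, U.2.2.inter V.2.2⟩,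
    inf_le_left, inf_le_right⟩

variable [IsTopologicalGroup K]

lemma isCompact_openNormalSubgroup [CompactSpace K]
    (U : {U : Subgroup K // U.Normal ∧ IsOpen (U : Set K)}) : IsCompact (U.1 : Set K) :=
  (U.1.isClosed_of_isOpen U.2.2).isCompact

lemma exists_openNormalSubgroup_subset_of_mem_nhds_one [CompactSpace K]
    [TotallyDisconnectedSpace K] {Ω : Set K} (hΩ : Ω ∈ 𝓝 1) :
    ∃ U : {U : Subgroup K // U.Normal ∧ IsOpen (U : Set K)}, (U.1 : Set K) ⊆ Ω := by
  obtain ⟨V, hVΩ, hV, h1V⟩ := mem_nhds_iff.1 hΩ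
  obtain ⟨H, hH⟩ := ProfiniteGrp.exist_openNormalSubgroup_sub_open_nhds_of_one hV h1V
  exact ⟨⟨H.toSubgroup, H.isNormal', H.isOpen'⟩, hH.trans hVΩ⟩

end OpenNormalSubgroups

theorem profinite_free_proper_action_quotient_limit_general
    (K : Type*) [Group K] [TopologicalSpace K] [IsTopologicalGroup K]
    [CompactSpace K] [TotallyDisconnectedSpace K]
    (X : Type*) [TopologicalSpace X] [T2Space X]
    [MulAction K X] [ContinuousSMul K X] :
    IsEmbedding
      (fun (x : X) (U : {U : Subgroup K // U.Normal ∧ IsOpen (U : Set K)}) =>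
        Quotient.mk (MulAction.orbitRel ↥U.1 X) x) ∧
    Set.range
      (fun (x : X) (U : {U : Subgroup K // U.Normal ∧ IsOpen (U : Set K)}) =>
        Quotient.mk (MulAction.orbitRel ↥U.1 X) x) =
      {f : ∀ U : {U : Subgroup K // U.Normal ∧ IsOpen (U : Set K)},
          Quotient (MulAction.orbitRel ↥U.1 X) |
        ∀ U V : {U : Subgroup K // U.Normal ∧ IsOpen (U : Set K)},
          U.1 ≤ V.1 → ∀ x : X,
            f U = Quotient.mk (MulAction.orbitRel ↥U.1 X) x →
            f V = Quotient.mk (MulAction.orbitRel ↥V.1 X) x} := by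
  have hind : IsInducing (MulAction.quotientsMk (X := X)
      (Subtype.val : {U : Subgroup K // U.Normal ∧ IsOpen (U : Set K)} → Subgroup K)) :=
    MulAction.isInducing_quotientsMk fun _ => exists_openNormalSubgroup_subset_of_mem_nhds_one
  refine ⟨⟨hind, hind.injective⟩, Set.Subset.antisymm ?_ fun f hf => ?_⟩
  · rintro _ ⟨x, rfl⟩ U V hUV y
    exact MulAction.quotientsMk_apply_eq_of_le hUV
  · exact MulAction.exists_quotientsMk_eq directed_openNormalSubgroups
      isCompact_openNormalSubgroup f hf

/--
Let `K` be a profinite group acting continuously, freely and properly on a locally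
compact Hausdorff space `X`.  Then the natural map from `X` to the inverse limit of the
quotient spaces `X/U`, taken over the open normal subgroups `U ≤ K` (ordered by reverse
inclusion), is a homeomorphism.  This is expressed as: the natural map into the product
`Π U, X/U` is a topological embedding whose range is exactly the set of compatible
families, i.e. the inverse limit with its subspace topology.
-/
theorem profinite_free_proper_action_quotient_limit
    (K : Type*) [Group K] [TopologicalSpace K] [IsTopologicalGroup K]
    [CompactSpace K] [T2Space K] [TotallyDisconnectedSpace K]
    (X : Type*) [TopologicalSpace X] [LocallyCompactSpace X] [T2Space X]
    [MulAction K X] [ContinuousSMul K X]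
    (hfree : ∀ (κ : K) (x : X), κ • x = x → κ = 1)
    (hproper : IsProperMap (fun q : K × X => (q.1 • q.2, q.2))) :
    IsEmbedding
      (fun (x : X) (U : {U : Subgroup K // U.Normal ∧ IsOpen (U : Set K)}) =>
        Quotient.mk (MulAction.orbitRel ↥U.1 X) x) ∧
    Set.range
      (fun (x : X) (U : {U : Subgroup K // U.Normal ∧ IsOpen (U : Set K)}) =>
        Quotient.mk (MulAction.orbitRel ↥U.1 X) x) =
      {f : ∀ U : {U : Subgroup K // U.Normal ∧ IsOpen (U : Set K)},
          Quotient (MulAction.orbitRel ↥U.1 X) |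
        ∀ U V : {U : Subgroup K // U.Normal ∧ IsOpen (U : Set K)},
          U.1 ≤ V.1 → ∀ x : X,
            f U = Quotient.mk (MulAction.orbitRel ↥U.1 X) x →
            f V = Quotient.mk (MulAction.orbitRel ↥V.1 X) x} :=
  profinite_free_proper_action_quotient_limit_general K X
end

section
/- Let p be a prime, k an algebraically closed field of characteristic p, G a group, and σ an automorphism of G with σ^p = id. Let V be a nonzero finite-dimensional k-vector space with a group representation ρ : G → GL(V) that is irreducible (V is a simple module over the group algebra k[G]). Suppose there exists a k-linear bijection A : V → V satisfying A(ρ(g)v) = ρ(σ(g))(A(v)) for all g ∈ G and v ∈ V. Then there exists a unique k-linear map f : V → V satisfying f(ρ(g)v) = ρ(σ(g))(f(v)) for all g ∈ G, v ∈ V, and f^p = id_V. -/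
/-!
For a σ-compatible map `f`, the power `f^p` intertwines `ρ` with `ρ ∘ σ^p = ρ`, so by Schur's
lemma it is a scalar; for the bijection `A` it is a nonzero scalar `c`, and `d⁻¹ • A` with
`d^p = c` is a σ-action. If `f, f'` are σ-actions, `f * f'^(p-1)` is likewise a scalar `e`, so
`f = e • f'` with `e^p = 1`, which forces `e = 1` in characteristic `p`.
-/

open Function

section

variable {k G V : Type*} [Field k] [Monoid G] [AddCommGroup V] [Module k V]

def Representation.IsTwistedIntertwiner (ρ : Representation k G V) (σ : G → G)
    (f : Module.End k V) : Prop :=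
  ∀ g v, f (ρ g v) = ρ (σ g) (f v)

namespace Representation.IsTwistedIntertwiner

variable {ρ : Representation k G V} {σ τ : G → G} {f f' A T : Module.End k V}

theorem one : IsTwistedIntertwiner ρ id 1 := fun _ _ => rfl

theorem mul (hf : IsTwistedIntertwiner ρ σ f) (hf' : IsTwistedIntertwiner ρ τ f') :
    IsTwistedIntertwiner ρ (σ ∘ τ) (f * f') := fun g v => by
  rw [Module.End.mul_apply, hf', hf, Module.End.mul_apply, comp_apply]

theorem pow (hf : IsTwistedIntertwiner ρ σ f) (n : ℕ) :
    IsTwistedIntertwiner ρ σ^[n] (f ^ n) := by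
  induction n with
  | zero => exact one
  | succ n ih => rw [pow_succ', iterate_succ']; exact hf.mul ih

theorem smul (hf : IsTwistedIntertwiner ρ σ f) (c : k) :
    IsTwistedIntertwiner ρ σ (c • f) := fun g v => by
  rw [LinearMap.smul_apply, LinearMap.smul_apply, map_smul, hf]

section AlgClosed

variable [IsAlgClosed k] [FiniteDimensional k V] [Nontrivial V]

theorem exists_eq_smul_one
    (hirr : ∀ W : Submodule k V, (∀ g, ∀ w ∈ W, ρ g w ∈ W) → W = ⊥ ∨ W = ⊤)
    (hT : IsTwistedIntertwiner ρ id T) : ∃ c : k, T = c • 1 := by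
  obtain ⟨c, hc⟩ := Module.End.exists_eigenvalue T
  have hstab : ∀ g, ∀ w ∈ T.eigenspace c, ρ g w ∈ T.eigenspace c := by
    intro g w hw
    rw [Module.End.mem_eigenspace_iff] at hw ⊢
    rw [hT, hw, map_smul, id]
  have htop : T.eigenspace c = ⊤ := (hirr _ hstab).resolve_left hc
  exact ⟨c, LinearMap.ext fun v => Module.End.mem_eigenspace_iff.mp (htop ▸ Submodule.mem_top)⟩

theorem exists_eq_smul_of_pow_eq_one {p : ℕ} (hp : p ≠ 0)
    (hirr : ∀ W : Submodule k V, (∀ g, ∀ w ∈ W, ρ g w ∈ W) → W = ⊥ ∨ W = ⊤)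
    (hσ : σ^[p] = id) (hf : IsTwistedIntertwiner ρ σ f) (hf' : IsTwistedIntertwiner ρ σ f')
    (hf'p : f' ^ p = 1) : ∃ e : k, f = e • f' := by
  have hcomm : IsTwistedIntertwiner ρ id (f * f' ^ (p - 1)) := by
    have := hf.mul (hf'.pow (p - 1))
    rwa [← iterate_succ', Nat.succ_eq_add_one, Nat.sub_add_cancel (Nat.one_le_iff_ne_zero.2 hp),
      hσ] at this
  obtain ⟨e, he⟩ := exists_eq_smul_one hirr hcomm
  refine ⟨e, ?_⟩
  calc f = f * f' ^ (p - 1) * f' := by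
        rw [mul_assoc, ← pow_succ, Nat.sub_add_cancel (Nat.one_le_iff_ne_zero.2 hp), hf'p, mul_one]
    _ = e • f' := by rw [he, smul_mul_assoc, one_mul]

theorem exists_pow_eq_one {p : ℕ} (hp : p ≠ 0)
    (hirr : ∀ W : Submodule k V, (∀ g, ∀ w ∈ W, ρ g w ∈ W) → W = ⊥ ∨ W = ⊤)
    (hσ : σ^[p] = id) (hA : IsTwistedIntertwiner ρ σ A) (hAinj : Injective A) :
    ∃ f, IsTwistedIntertwiner ρ σ f ∧ f ^ p = 1 := by
  have hAp := hA.pow p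
  rw [hσ] at hAp
  obtain ⟨c, hc⟩ := exists_eq_smul_one hirr hAp
  have hc0 : c ≠ 0 := by
    rintro rfl
    obtain ⟨v, hv⟩ := exists_ne (0 : V)
    refine hv (hAinj.iterate p ?_)
    rw [← Module.End.pow_apply, hc, ← Module.End.pow_apply, hc]
    simp
  obtain ⟨d, hd⟩ := IsAlgClosed.exists_pow_nat_eq c (Nat.pos_of_ne_zero hp)
  refine ⟨d⁻¹ • A, hA.smul _, ?_⟩
  rw [smul_pow, hc, inv_pow, hd, smul_smul, inv_mul_cancel₀ hc0, one_smul]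

theorem eq_of_pow_eq_one {p : ℕ} [Fact p.Prime] [CharP k p]
    (hirr : ∀ W : Submodule k V, (∀ g, ∀ w ∈ W, ρ g w ∈ W) → W = ⊥ ∨ W = ⊤)
    (hσ : σ^[p] = id) (hf : IsTwistedIntertwiner ρ σ f) (hf' : IsTwistedIntertwiner ρ σ f')
    (hfp : f ^ p = 1) (hf'p : f' ^ p = 1) : f = f' := by
  obtain ⟨e, rfl⟩ := exists_eq_smul_of_pow_eq_one (Fact.out : p.Prime).ne_zero hirr hσ hf hf' hf'p
  obtain ⟨v, hv⟩ := exists_ne (0 : V)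
  have hep : e ^ p = 1 ^ p := by
    rw [smul_pow, hf'p] at hfp
    exact smul_left_injective k hv (by simpa using congr($hfp v))
  rw [frobenius_inj k p hep, one_smul]

end AlgClosed

end Representation.IsTwistedIntertwiner

end

open Representation.IsTwistedIntertwiner in
/--
Let `p` be a prime, `k` an algebraically closed field of characteristic `p`, `G` a group
and `σ` an automorphism of `G` with `σ^p = id`.  Let `V` be a nonzero finite-dimensional
`k`-vector space with an irreducible representation `ρ : G → GL(V)`.  If there is a
`k`-linear bijection `A : V → V` intertwining `ρ` with `ρ ∘ σ`, then there is a unique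
`k`-linear map `f : V → V` intertwining `ρ` with `ρ ∘ σ` and satisfying `f^p = id`.
-/
theorem unique_compatible_sigma_action_on_irreducible
    (p : ℕ) (hp : p.Prime)
    (k : Type*) [Field k] [IsAlgClosed k] [CharP k p]
    (G : Type*) [Group G]
    (σ : G ≃* G) (hσ : ∀ g, (⇑σ)^[p] g = g)
    (V : Type*) [AddCommGroup V] [Module k V] [FiniteDimensional k V] [Nontrivial V]
    (ρ : Representation k G V)
    (hirr : ∀ W : Submodule k V, (∀ (g : G), ∀ w ∈ W, ρ g w ∈ W) → W = ⊥ ∨ W = ⊤)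
    (hA : ∃ A : V ≃ₗ[k] V, ∀ (g : G) (v : V), A (ρ g v) = ρ (σ g) (A v)) :
    ∃! f : V →ₗ[k] V,
      (∀ (g : G) (v : V), f (ρ g v) = ρ (σ g) (f v)) ∧ f ^ p = 1 := by
  have : Fact p.Prime := ⟨hp⟩
  have hσp : (⇑σ)^[p] = id := funext hσ
  obtain ⟨A, hA⟩ := hA
  obtain ⟨f, hf, hfp⟩ := exists_pow_eq_one (A := A.toLinearMap) hp.ne_zero hirr hσp hA A.injective
  exact ⟨f, ⟨hf, hfp⟩, fun f' ⟨hf', hf'p⟩ => eq_of_pow_eq_one hirr hσp hf' hf hf'p hfp⟩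
end

section
/- Let k be a perfect field of characteristic 2, V a k-vector space, and Q : V → k a quadratic form with polar form B(x,y) = Q(x+y) − Q(x) − Q(y). Let A : V → V be a k-linear map satisfying B(Ax,Ay) = B(x,y) for all x,y ∈ V. Then there exists a unique k-linear functional ℓ : V → k such that Q(Ax) − Q(x) = ℓ(x)² for all x ∈ V. -/
/-!
`D := Q ∘ A - Q` is again a quadratic form, and `A` preserving the polar form of `Q` says
exactly that `D` has vanishing polar form, i.e. `D` is additive. In characteristic `2`,
`D (c • x) = c ^ 2 * D x`, so composing `D` with the inverse of the Frobenius of the perfect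
field `k` gives a linear functional `ℓ` with `ℓ x ^ 2 = D x`; it is unique because squaring is
injective.
-/

namespace QuadraticMap

theorem polar_comp_sub_self_eq_zero {R M N : Type*} [CommRing R] [AddCommGroup M] [Module R M]
    [AddCommGroup N] [Module R N] (Q : QuadraticMap R M N) {A : M →ₗ[R] M}
    (hA : ∀ x y, polar Q (A x) (A y) = polar Q x y) (x y : M) :
    polar (Q.comp A - Q) x y = 0 := by
  have hpolar : polar (Q.comp A - Q) x y = polar Q (A x) (A y) - polar Q x y := by
    simp only [polar, sub_apply, comp_apply, map_add]
    abel
  rw [hpolar, hA, sub_self]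

variable {k V : Type*} [CommRing k] [CharP k 2] [PerfectRing k 2] [AddCommGroup V] [Module k V]

theorem existsUnique_linearMap_sq_eq_of_polar_eq_zero (D : QuadraticMap k V k)
    (hD : ∀ x y, polar D x y = 0) : ∃! ℓ : V →ₗ[k] k, ∀ x, D x = ℓ x ^ 2 := by
  have hsqrt : ∀ a : k, (frobeniusEquiv k 2).symm a ^ 2 = a := fun a =>
    frobenius_apply_frobeniusEquiv_symm k 2 a
  let ℓ : V →ₗ[k] k :=
    { toFun := fun x => (frobeniusEquiv k 2).symm (D x)
      map_add' := fun x y => by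
        rw [QuadraticMap.map_add (⇑D), hD, add_zero, map_add]
      map_smul' := fun c x => by
        rw [QuadraticMap.map_smul, smul_eq_mul, RingHom.id_apply, smul_eq_mul, ← pow_two,
          map_mul, ← frobenius_def, frobeniusEquiv_symm_apply_frobenius] }
  refine ⟨ℓ, fun x => (hsqrt (D x)).symm, fun ℓ' hℓ' => LinearMap.ext fun x => ?_⟩
  apply (frobeniusEquiv k 2).injective
  simp only [frobeniusEquiv_apply, frobenius_def, ← hℓ' x]
  exact (hsqrt (D x)).symm

end QuadraticMap

/--
Let `k` be a perfect field of characteristic `2`, `V` a `k`-vector space and `Q` a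
quadratic form on `V` with polar form `B(x,y) = Q(x+y) − Q(x) − Q(y)`.  If `A : V → V`
is a `k`-linear map preserving `B`, then there is a unique linear functional
`ℓ : V → k` with `Q(Ax) − Q(x) = ℓ(x)²` for all `x`.
-/
theorem exists_unique_dickson_functional
    (k : Type*) [Field k] [CharP k 2] [PerfectField k]
    (V : Type*) [AddCommGroup V] [Module k V]
    (Q : QuadraticForm k V)
    (A : V →ₗ[k] V)
    (hA : ∀ x y : V, QuadraticMap.polar (⇑Q) (A x) (A y) = QuadraticMap.polar (⇑Q) x y) :
    ∃! ℓ : V →ₗ[k] k, ∀ x : V, Q (A x) - Q x = ℓ x ^ 2 :=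
  (Q.comp A - Q).existsUnique_linearMap_sq_eq_of_polar_eq_zero (Q.polar_comp_sub_self_eq_zero hA)
end
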